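/- arXiv:1306.2800 — 7 statements merged into one kernel-verified Lean document; each statement's English description precedes it below -/
import Mathlib

section
/- Let Ω ⊂ ℝ² be a nonempty open bounded connected set admitting a web viscosity solution of the Dirichlet problem −Δ_∞ u = 1 in Ω, u = 0 on ∂Ω. Then, denoting S := Cut(Ω) (which equals high(Ω)), the set Ω is the open tubular neighborhood Ω = {x ∈ ℝ² : d_S(x) < ρ_Ω}, where d_S(x) := min_{y∈S}|x−y|. -/
open scoped InnerProductSpace
open Metric Set Filter

noncomputable section

abbrev En (n : ℕ) := EuclideanSpace ℝ (Fin n)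

variable {n : ℕ}

/-- Distance from the boundary of `Ω`. -/
noncomputable def dBd (Ω : Set (En n)) (x : En n) : ℝ := Metric.infDist x (frontier Ω)

/-- The inradius `ρ_Ω := max_{closure Ω} d_∂Ω`. -/
noncomputable def rhoΩ (Ω : Set (En n)) : ℝ := sSup (dBd Ω '' closure Ω)

/-- The singular set `Σ(Ω)`: points of `Ω` where `d_∂Ω` is not differentiable. -/
def SingSet (Ω : Set (En n)) : Set (En n) := {x ∈ Ω | ¬ DifferentiableAt ℝ (dBd Ω) x}

/-- The cut locus: the closure of the singular set. -/
def cutLocus (Ω : Set (En n)) : Set (En n) := closure (SingSet Ω)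

/-- The high ridge: points of `closure Ω` where `d_∂Ω` attains its maximum `ρ_Ω`. -/
def highRidge (Ω : Set (En n)) : Set (En n) := {x ∈ closure Ω | dBd Ω x = rhoΩ Ω}

noncomputable def c₀ : ℝ := 3 ^ ((4 : ℝ) / 3) / 4

/-- The candidate web solution `φ_Ω`. -/
noncomputable def phiΩ (Ω : Set (En n)) (x : En n) : ℝ :=
  c₀ * (rhoΩ Ω ^ ((4 : ℝ) / 3) - (rhoΩ Ω - dBd Ω x) ^ ((4 : ℝ) / 3))

/-- The infinity Laplacian `⟨D²φ(x)∇φ(x), ∇φ(x)⟩` of a smooth function. -/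
noncomputable def infLap (φ : En n → ℝ) (x : En n) : ℝ :=
  ⟪(fderiv ℝ (gradient φ) x) (gradient φ x), gradient φ x⟫_ℝ

/-- Viscosity subsolution of `-Δ_∞ u = 1` on an open set `A`. -/
def IsViscSubsol (A : Set (En n)) (u : En n → ℝ) : Prop :=
  ∀ φ : En n → ℝ, ContDiffOn ℝ 2 φ A → ∀ x₀ ∈ A,
    IsLocalMin (φ - u) x₀ → -infLap φ x₀ ≤ 1

/-- Viscosity supersolution of `-Δ_∞ u = 1` on an open set `A`. -/
def IsViscSupersol (A : Set (En n)) (u : En n → ℝ) : Prop :=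
  ∀ φ : En n → ℝ, ContDiffOn ℝ 2 φ A → ∀ x₀ ∈ A,
    IsLocalMax (φ - u) x₀ → 1 ≤ -infLap φ x₀

/-- Viscosity solution of `-Δ_∞ u = 1` on an open set `A`. -/
def IsViscSol (A : Set (En n)) (u : En n → ℝ) : Prop :=
  ContinuousOn u A ∧ IsViscSubsol A u ∧ IsViscSupersol A u

/-- Viscosity solution of the Dirichlet problem `-Δ_∞ u = 1` in `Ω`, `u = 0` on `∂Ω`. -/
def IsDirichletSol (Ω : Set (En n)) (u : En n → ℝ) : Prop :=
  ContinuousOn u (closure Ω) ∧ (∀ x ∈ frontier Ω, u x = 0) ∧ IsViscSol Ω u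

/-- `u` is a web function on `Ω`: it depends only on the distance from the boundary. -/
def IsWebOn (Ω : Set (En n)) (u : En n → ℝ) : Prop :=
  ∃ f : ℝ → ℝ, ContinuousOn f (Set.Icc 0 (rhoΩ Ω)) ∧ ∀ x ∈ closure Ω, u x = f (dBd Ω x)

/-- Fréchet superdifferential of `u` at `x`. -/
def superDiff (u : En n → ℝ) (x : En n) : Set (En n) :=
  {p | ∀ ε > 0, ∀ᶠ y in nhds x, u y - u x - ⟪p, y - x⟫_ℝ ≤ ε * ‖y - x‖}

/-- Set of reachable gradients `D*u(x)`. -/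
def reachGrad (u : En n → ℝ) (x : En n) : Set (En n) :=
  {p | ∃ xs : ℕ → En n, (∀ h, xs h ≠ x) ∧ (∀ h, DifferentiableAt ℝ u (xs h)) ∧
    Filter.Tendsto xs Filter.atTop (nhds x) ∧
    Filter.Tendsto (fun h => gradient u (xs h)) Filter.atTop (nhds p)}

/-- The set of projections of `x` onto a closed set `S`. -/
def projSet (S : Set (En n)) (x : En n) : Set (En n) :=
  {y ∈ S | dist x y = Metric.infDist x S}

end

/-! A web solution `u = f ∘ d_∂Ω` reflects its PDE onto the profile `f`. Testing the
supersolution property with constants shows that `u` has no interior local minimum, so `f` is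
strictly increasing; testing it with the cone `y ↦ ρ_Ω - |y - x_max|` (whose infinity Laplacian
vanishes) shows that no affine function of nonnegative slope touches `f` from below at an
interior point, so `f` is concave. At a point of `Ω` below the high ridge where `d_∂Ω` is not differentiable there are two
nearest boundary points, hence `d_∂Ω`, and with it `u = f ∘ d_∂Ω`, has a concave corner; a
subsolution cannot have one. Thus `Σ(Ω) ⊆ high(Ω)`, and the reverse inclusion holds because
`d_∂Ω` has a local maximum but a nonzero slope towards a foot at every point of the ridge.
Finally, since `d_∂Ω` is differentiable off the ridge, it increases with unit speed away from the
boundary, so every `x ∈ Ω` is within `ρ_Ω - d_∂Ω(x)` of the ridge. -/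

open Topology

theorem norm_smul_add_le_of_norm_eq_one {E : Type*} [NormedAddCommGroup E]
    [InnerProductSpace ℝ E] {e v : E} (he : ‖e‖ = 1) {r : ℝ} (hr : 0 < r)
    (hv : -r ≤ 2 * ⟪e, v⟫_ℝ) :
    ‖r • e + v‖ ≤ r + ⟪e, v⟫_ℝ + (‖v‖ ^ 2 - ⟪e, v⟫_ℝ ^ 2) / r := by
  set s := ⟪e, v⟫_ℝ
  have hsv : s ^ 2 ≤ ‖v‖ ^ 2 := by
    have := abs_real_inner_le_norm e v
    rw [he, one_mul] at this
    exact sq_le_sq' (abs_le.mp this).1 (abs_le.mp this).2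
  set B := (‖v‖ ^ 2 - s ^ 2) / r
  have hB : 0 ≤ B := div_nonneg (by linarith) hr.le
  have hrB : r * B = ‖v‖ ^ 2 - s ^ 2 := mul_div_cancel₀ _ hr.ne'
  have hsq : ‖r • e + v‖ ^ 2 = r ^ 2 + 2 * r * s + ‖v‖ ^ 2 := by
    rw [norm_add_sq_real, norm_smul, Real.norm_of_nonneg hr.le, he, real_inner_smul_left]
    ring
  -- `(r + s + B)² - ‖r • e + v‖² = (r + 2 s) B + B²`
  refine (pow_le_pow_iff_left₀ (norm_nonneg _) (by linarith) two_ne_zero).mp ?_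
  nlinarith [mul_nonneg hB (by linarith : 0 ≤ r + 2 * s)]

theorem norm_inv_norm_smul {E : Type*} [NormedAddCommGroup E] [NormedSpace ℝ E] {a : E}
    (ha : a ≠ 0) : ‖‖a‖⁻¹ • a‖ = 1 := by
  rw [norm_smul, norm_inv, norm_norm, inv_mul_cancel₀ (norm_ne_zero_iff.mpr ha)]

theorem tendsto_slope_fderiv {E : Type*} [NormedAddCommGroup E] [NormedSpace ℝ E] {F : E → ℝ}
    {x : E} (hF : DifferentiableAt ℝ F x) (v : E) :
    Tendsto (fun s : ℝ => s⁻¹ * (F (x + s • v) - F x)) (𝓝[>] 0) (𝓝 (fderiv ℝ F x v)) := by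
  have hline : HasDerivAt (fun s : ℝ => x + s • v) v 0 := by
    simpa using ((hasDerivAt_id (0 : ℝ)).smul_const v).const_add x
  have := (hF.hasFDerivAt.comp_hasDerivAt_of_eq 0 hline (by simp)).tendsto_slope_zero_right
  simpa using this

theorem ConcaveOn.exists_le_affine {S : Set ℝ} {f : ℝ → ℝ} (hf : ConcaveOn ℝ S f) {t : ℝ}
    (ht : t ∈ interior S) : ∃ a : ℝ, ∀ s ∈ S, f s ≤ f t + a * (s - t) := by
  have hg := hf.neg
  refine ⟨-derivWithin (-f) (Ioi t) t, fun s hs => ?_⟩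
  rcases lt_trichotomy s t with hst | rfl | hts
  · have h := (hg.slope_le_leftDeriv_of_mem_interior hs ht hst).trans
      (hg.leftDeriv_le_rightDeriv_of_mem_interior ht)
    rw [slope_def_field, div_le_iff₀ (sub_pos.mpr hst)] at h
    simp only [Pi.neg_apply] at h
    linarith
  · simp
  · have h := hg.rightDeriv_le_slope_of_mem_interior ht hs hts
    rw [slope_def_field, le_div_iff₀ (sub_pos.mpr hts)] at h
    simp only [Pi.neg_apply] at h
    linarith

section QuadraticTest

variable {n : ℕ}

noncomputable def quadTest (x₀ Q : En n) (α β : ℝ) (e : En n) (y : En n) : ℝ :=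
  ⟪Q, y - x₀⟫_ℝ + α * ⟪y - x₀, y - x₀⟫_ℝ + β * (⟪e, y - x₀⟫_ℝ * ⟪e, y - x₀⟫_ℝ)

theorem contDiff_quadTest (x₀ Q : En n) (α β : ℝ) (e : En n) :
    ContDiff ℝ 2 (quadTest x₀ Q α β e) := by
  have h0 : ContDiff ℝ 2 (fun y : En n => y - x₀) := contDiff_id.sub contDiff_const
  have he : ContDiff ℝ 2 (fun y : En n => ⟪e, y - x₀⟫_ℝ) := contDiff_const.inner ℝ h0
  exact ((contDiff_const.inner ℝ h0).add (contDiff_const.mul (h0.inner ℝ h0))).add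
    (contDiff_const.mul (he.mul he))

theorem gradient_quadTest (x₀ Q : En n) (α β : ℝ) (e : En n) :
    gradient (quadTest x₀ Q α β e) =
      fun y => Q + (2 * α) • (y - x₀) + (2 * β * ⟪e, y - x₀⟫_ℝ) • e := by
  ext1 y
  refine HasGradientAt.gradient ?_
  rw [hasGradientAt_iff_hasFDerivAt]
  have h0 : HasFDerivAt (fun y : En n => y - x₀) (ContinuousLinearMap.id ℝ (En n)) y :=
    (hasFDerivAt_id y).sub_const x₀
  have h3 := (hasFDerivAt_const e y).inner ℝ h0
  refine ((((hasFDerivAt_const Q y).inner ℝ h0).add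
    ((hasFDerivAt_const α y).mul (h0.inner ℝ h0))).add
    ((hasFDerivAt_const β y).mul (h3.mul h3))).congr_fderiv ?_
  ext w
  simp [fderivInnerCLM_apply, inner_sub_right, real_inner_comm w]
  ring

theorem infLap_quadTest (x₀ Q : En n) (α β : ℝ) (e : En n) :
    infLap (quadTest x₀ Q α β e) x₀ = 2 * α * ⟪Q, Q⟫_ℝ + 2 * β * (⟪e, Q⟫_ℝ * ⟪e, Q⟫_ℝ) := by
  set H : En n →L[ℝ] En n :=
    (2 * α) • ContinuousLinearMap.id ℝ (En n) + (2 * β) • (innerSL ℝ e).smulRight e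
  have hH : HasFDerivAt (gradient (quadTest x₀ Q α β e)) H x₀ := by
    rw [gradient_quadTest]
    have h0 : HasFDerivAt (fun y : En n => y - x₀) (ContinuousLinearMap.id ℝ (En n)) x₀ :=
      (hasFDerivAt_id x₀).sub_const x₀
    have : HasFDerivAt (fun y => H (y - x₀)) H x₀ := H.hasFDerivAt.comp x₀ h0
    refine (this.const_add Q).congr_of_eventuallyEq (.of_forall fun y => ?_)
    simp [H, smul_smul]
    module
  rw [infLap, hH.fderiv, gradient_quadTest]
  simp [H, inner_add_left, real_inner_smul_left]

end QuadraticTest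

section DistanceFunction

variable {n : ℕ} {Ω : Set (En n)} {x y ξ : En n}

theorem continuous_dBd : Continuous (dBd Ω) := continuous_infDist_pt _

theorem dBd_nonneg : 0 ≤ dBd Ω x := infDist_nonneg

theorem dBd_le_dist (hξ : ξ ∈ frontier Ω) : dBd Ω x ≤ dist x ξ := infDist_le_dist_of_mem hξ

theorem dBd_le_dBd_add_dist : dBd Ω x ≤ dBd Ω y + dist x y := infDist_le_infDist_add_dist

theorem dist_eq_dBd_of_mem_projSet (hξ : ξ ∈ projSet (frontier Ω) x) : dist x ξ = dBd Ω x :=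
  hξ.2

theorem isCompact_frontier_of_isBounded (hbd : Bornology.IsBounded Ω) : IsCompact (frontier Ω) :=
  hbd.isCompact_closure.of_isClosed_subset isClosed_frontier frontier_subset_closure

theorem projSet_frontier_nonempty (hbd : Bornology.IsBounded Ω) (hfr : (frontier Ω).Nonempty)
    (x : En n) : (projSet (frontier Ω) x).Nonempty := by
  obtain ⟨ξ, hξ, h⟩ := (isCompact_frontier_of_isBounded hbd).exists_infDist_eq_dist hfr x
  exact ⟨ξ, hξ, h.symm⟩

theorem dBd_pos (hop : IsOpen Ω) (hfr : (frontier Ω).Nonempty) (hx : x ∈ Ω) : 0 < dBd Ω x :=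
  (isClosed_frontier.notMem_iff_infDist_pos hfr).mp fun h => (hop.frontier_eq ▸ h).2 hx

theorem mem_of_dBd_pos (hop : IsOpen Ω) (hx : x ∈ closure Ω) (hd : 0 < dBd Ω x) : x ∈ Ω := by
  by_contra h
  exact hd.ne' (infDist_zero_of_mem (hop.frontier_eq ▸ ⟨hx, h⟩))

theorem ball_dBd_subset (hop : IsOpen Ω) (hx : x ∈ Ω) : ball x (dBd Ω x) ⊆ Ω := by
  by_cases hpos : 0 < dBd Ω x
  · refine (convex_ball x _).isPreconnected.subset_of_closure_inter_subset hop
      ⟨x, mem_ball_self hpos, hx⟩ fun z ⟨hzc, hzb⟩ => ?_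
    by_contra hz
    exact (dBd_le_dist (hop.frontier_eq ▸ ⟨hzc, hz⟩)).not_gt (mem_ball'.mp hzb)
  · rw [ball_eq_empty.mpr (not_lt.mp hpos)]
    exact empty_subset _

theorem dBd_le_rhoΩ (hbd : Bornology.IsBounded Ω) (hx : x ∈ closure Ω) : dBd Ω x ≤ rhoΩ Ω :=
  le_csSup (hbd.isCompact_closure.image continuous_dBd).bddAbove (mem_image_of_mem _ hx)

theorem isClosed_highRidge : IsClosed (highRidge Ω) :=
  isClosed_closure.inter (isClosed_eq continuous_dBd continuous_const)

theorem highRidge_nonempty (hbd : Bornology.IsBounded Ω) (hfr : (frontier Ω).Nonempty) :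
    (highRidge Ω).Nonempty := by
  have hne : (closure Ω).Nonempty := hfr.mono frontier_subset_closure
  obtain ⟨x, hx, hmax⟩ :=
    hbd.isCompact_closure.exists_isMaxOn hne continuous_dBd.continuousOn
  refine ⟨x, hx, le_antisymm (dBd_le_rhoΩ hbd hx) (csSup_le (hne.image _) ?_)⟩
  rintro _ ⟨y, hy, rfl⟩
  exact hmax hy

theorem rhoΩ_pos (hop : IsOpen Ω) (hbd : Bornology.IsBounded Ω) (hfr : (frontier Ω).Nonempty) :
    0 < rhoΩ Ω := by
  obtain ⟨x, hx⟩ := closure_nonempty_iff.mp (hfr.mono frontier_subset_closure)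
  exact (dBd_pos hop hfr hx).trans_le (dBd_le_rhoΩ hbd (subset_closure hx))

theorem highRidge_subset (hop : IsOpen Ω) (hbd : Bornology.IsBounded Ω)
    (hfr : (frontier Ω).Nonempty) : highRidge Ω ⊆ Ω := fun _ hx =>
  mem_of_dBd_pos hop hx.1 (hx.2 ▸ rhoΩ_pos hop hbd hfr)

theorem dBd_lineMap_of_mem_projSet (hξ : ξ ∈ projSet (frontier Ω) x) {θ : ℝ} (hθ0 : 0 ≤ θ)
    (hθ1 : θ ≤ 1) : dBd Ω (AffineMap.lineMap x ξ θ) = (1 - θ) * dBd Ω x := by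
  have h1 := dBd_le_dist (x := AffineMap.lineMap x ξ θ) hξ.1
  have h2 := dBd_le_dBd_add_dist (Ω := Ω) (x := x) (y := AffineMap.lineMap x ξ θ)
  rw [dist_lineMap_right, Real.norm_of_nonneg (by linarith), dist_eq_dBd_of_mem_projSet hξ] at h1
  rw [dist_comm, dist_lineMap_left, Real.norm_of_nonneg hθ0, dist_eq_dBd_of_mem_projSet hξ] at h2
  linarith

theorem ball_rhoΩ_subset (hop : IsOpen Ω) (hbd : Bornology.IsBounded Ω)
    (hfr : (frontier Ω).Nonempty) (hx : x ∈ highRidge Ω) : ball x (rhoΩ Ω) ⊆ Ω :=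
  hx.2 ▸ ball_dBd_subset hop (highRidge_subset hop hbd hfr hx)

theorem add_smul_mem_of_mem_highRidge (hop : IsOpen Ω) (hbd : Bornology.IsBounded Ω)
    (hfr : (frontier Ω).Nonempty) (hx : x ∈ highRidge Ω) {e : En n} (he : ‖e‖ = 1) {r : ℝ}
    (hr : 0 ≤ r) (hrρ : r < rhoΩ Ω) : x + r • e ∈ Ω :=
  ball_rhoΩ_subset hop hbd hfr hx (by
    rwa [mem_ball, dist_eq_norm, add_sub_cancel_left, norm_smul, he, mul_one,
      Real.norm_of_nonneg hr])

theorem exists_dBd_add_smul_eq (hop : IsOpen Ω) (hbd : Bornology.IsBounded Ω)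
    (hfr : (frontier Ω).Nonempty) {t : ℝ} (ht : 0 ≤ t) (htρ : t ≤ rhoΩ Ω) :
    ∃ xm ∈ highRidge Ω, ∃ e : En n, ‖e‖ = 1 ∧ dBd Ω (xm + (rhoΩ Ω - t) • e) = t := by
  have hρ := rhoΩ_pos hop hbd hfr
  obtain ⟨xm, hxm⟩ := highRidge_nonempty hbd hfr
  obtain ⟨ξ, hξ⟩ := projSet_frontier_nonempty hbd hfr xm
  have hξxm : ‖ξ - xm‖ = rhoΩ Ω := by
    rw [← dist_eq_norm, dist_comm, dist_eq_dBd_of_mem_projSet hξ, hxm.2]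
  refine ⟨xm, hxm, ‖ξ - xm‖⁻¹ • (ξ - xm), norm_inv_norm_smul (norm_ne_zero_iff.mp
    (hξxm ▸ hρ.ne')), ?_⟩
  have hθ : 0 ≤ (rhoΩ Ω - t) / rhoΩ Ω := div_nonneg (by linarith) hρ.le
  have := dBd_lineMap_of_mem_projSet hξ hθ ((div_le_one hρ).mpr (by linarith))
  rw [AffineMap.lineMap_apply_module', hxm.2, add_comm] at this
  rw [smul_smul, hξxm, ← div_eq_mul_inv, this]
  field_simp
  ring

theorem dBd_le_quadratic_of_mem_projSet (hξ : ξ ∈ projSet (frontier Ω) x) (hx : 0 < dBd Ω x)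
    (hy : ‖y - x‖ ≤ dBd Ω x / 2) :
    dBd Ω y ≤ dBd Ω x + ⟪‖x - ξ‖⁻¹ • (x - ξ), y - x⟫_ℝ + ‖y - x‖ ^ 2 / dBd Ω x := by
  have hxξ : ‖x - ξ‖ = dBd Ω x := by rw [← dist_eq_norm, dist_eq_dBd_of_mem_projSet hξ]
  have hne : x - ξ ≠ 0 := by
    rintro h
    rw [h, norm_zero] at hxξ
    exact hx.ne hxξ
  set e := ‖x - ξ‖⁻¹ • (x - ξ)
  have he : ‖e‖ = 1 := norm_inv_norm_smul hne
  have hev : |⟪e, y - x⟫_ℝ| ≤ ‖y - x‖ := by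
    simpa [he] using abs_real_inner_le_norm e (y - x)
  have hnorm := norm_smul_add_le_of_norm_eq_one he (hxξ ▸ hx)
    (v := y - x) (by linarith [(abs_le.mp hev).1])
  rw [smul_inv_smul₀ (norm_ne_zero_iff.mpr hne), sub_add_sub_cancel', hxξ] at hnorm
  calc dBd Ω y ≤ ‖y - ξ‖ := dist_eq_norm y ξ ▸ dBd_le_dist hξ.1
    _ ≤ _ := hnorm
    _ ≤ _ := by gcongr; nlinarith [sq_nonneg ⟪e, y - x⟫_ℝ]

end DistanceFunction

section Differentiability

variable {n : ℕ} {Ω : Set (En n)} {x y ξ ζ : En n}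

theorem inner_le_dBd_sub_dBd (hζ : ζ ∈ projSet (frontier Ω) y) (x : En n) :
    ⟪‖x - ζ‖⁻¹ • (x - ζ), y - x⟫_ℝ ≤ dBd Ω y - dBd Ω x := by
  set w := ‖x - ζ‖⁻¹ • (x - ζ)
  have hw : ‖w‖ ≤ 1 := by
    rw [norm_smul, norm_inv, norm_norm]
    exact inv_mul_le_one_of_le₀ le_rfl (norm_nonneg _)
  have hwx : ⟪w, x - ζ⟫_ℝ = ‖x - ζ‖ := by
    rw [real_inner_smul_left, real_inner_self_eq_norm_sq]
    rcases eq_or_ne ‖x - ζ‖ 0 with h | h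
    · simp [h]
    · field_simp
  have hwy : ⟪w, y - ζ⟫_ℝ ≤ ‖y - ζ‖ :=
    (real_inner_le_norm w _).trans (mul_le_of_le_one_left (norm_nonneg _) hw)
  have hsplit : y - ζ = (x - ζ) + (y - x) := by abel
  rw [hsplit, inner_add_right, hwx, ← hsplit, ← dist_eq_norm y ζ,
    dist_eq_dBd_of_mem_projSet hζ] at hwy
  linarith [dist_eq_norm x ζ ▸ dBd_le_dist (x := x) hζ.1]

theorem eventually_projSet_subset_ball (hbd : Bornology.IsBounded Ω)
    (huniq : projSet (frontier Ω) x ⊆ {ξ}) {δ : ℝ} (hδ : 0 < δ) :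
    ∀ᶠ y in 𝓝 x, projSet (frontier Ω) y ⊆ ball ξ δ := by
  set K := frontier Ω \ ball ξ δ
  rcases K.eq_empty_or_nonempty with hK | hK
  · exact .of_forall fun y ζ hζ => by_contra fun h => hK.subset ⟨hζ.1, h⟩
  obtain ⟨ζ₀, hζ₀K, hmin⟩ := ((isCompact_frontier_of_isBounded hbd).diff isOpen_ball).exists_isMinOn
    hK (continuous_const.dist continuous_id).continuousOn
  -- the feet of `x` avoid `K`, so points of `K` are farther from `x` than `d x` by a margin `m`
  set m := dist x ζ₀ - dBd Ω x
  have hm : 0 < m := by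
    refine sub_pos.mpr ((dBd_le_dist hζ₀K.1).lt_of_ne fun h => hζ₀K.2 ?_)
    rw [huniq ⟨hζ₀K.1, h.symm⟩]
    exact mem_ball_self hδ
  filter_upwards [ball_mem_nhds x (half_pos hm)] with y hy ζ hζ
  by_contra hζξ
  have h1 : dist x ζ₀ ≤ dist x ζ := hmin ⟨hζ.1, hζξ⟩
  have h2 := dist_triangle x y ζ
  have h3 := dBd_le_dBd_add_dist (Ω := Ω) (x := y) (y := x)
  rw [mem_ball] at hy
  rw [dist_eq_dBd_of_mem_projSet hζ, dist_comm x y] at h2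
  linarith

theorem hasFDerivAt_dBd_of_projSet_eq_singleton (hop : IsOpen Ω) (hbd : Bornology.IsBounded Ω)
    (hx : x ∈ Ω) (hξ : projSet (frontier Ω) x = {ξ}) :
    HasFDerivAt (dBd Ω) (innerSL ℝ (‖x - ξ‖⁻¹ • (x - ξ))) x := by
  have hξx : ξ ∈ projSet (frontier Ω) x := hξ ▸ rfl
  have hd : 0 < dBd Ω x := dBd_pos hop ⟨ξ, hξx.1⟩ hx
  set w : En n → En n := fun ζ => ‖x - ζ‖⁻¹ • (x - ζ)
  have hw : ContinuousAt w ξ := by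
    have hne : ‖x - ξ‖ ≠ 0 := by
      rw [← dist_eq_norm, dist_eq_dBd_of_mem_projSet hξx]; exact hd.ne'
    exact ((continuous_const.sub continuous_id).norm.continuousAt.inv₀ hne).smul
      (continuous_const.sub continuous_id).continuousAt
  refine .of_isLittleO (Asymptotics.isLittleO_iff.mpr fun c hc => ?_)
  obtain ⟨δ, hδ, hwδ⟩ := Metric.continuousAt_iff.mp hw c hc
  filter_upwards [eventually_projSet_subset_ball hbd hξ.subset hδ,
    ball_mem_nhds x (lt_min (half_pos hd) (mul_pos hc hd))] with y hfeet hy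
  rw [mem_ball, dist_eq_norm, lt_min_iff] at hy
  obtain ⟨ζ, hζ⟩ := projSet_frontier_nonempty hbd ⟨ξ, hξx.1⟩ y
  have hupper := dBd_le_quadratic_of_mem_projSet hξx hd (y := y) hy.1.le
  have hlower := inner_le_dBd_sub_dBd hζ x
  have hwζ : ‖w ζ - w ξ‖ < c := by rw [← dist_eq_norm]; exact hwδ (hfeet hζ)
  have hcs := real_inner_le_norm (w ξ - w ζ) (y - x)
  rw [innerSL_apply_apply, Real.norm_eq_abs, abs_le]
  constructor
  · rw [inner_sub_left, norm_sub_rev] at hcs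
    nlinarith [norm_nonneg (y - x)]
  · have : ‖y - x‖ ^ 2 / dBd Ω x ≤ c * ‖y - x‖ := by
      rw [div_le_iff₀ hd, sq]
      nlinarith [norm_nonneg (y - x)]
    linarith

theorem fderiv_dBd_sub_of_mem_projSet (hd : DifferentiableAt ℝ (dBd Ω) x)
    (hξ : ξ ∈ projSet (frontier Ω) x) : fderiv ℝ (dBd Ω) x (ξ - x) = -dBd Ω x := by
  refine tendsto_nhds_unique (tendsto_slope_fderiv hd _) (tendsto_const_nhds.congr' ?_)
  filter_upwards [Ioo_mem_nhdsGT one_pos] with s hs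
  have := dBd_lineMap_of_mem_projSet hξ hs.1.le hs.2.le
  rw [AffineMap.lineMap_apply_module', add_comm] at this
  rw [this]
  field_simp [hs.1.ne']
  ring

end Differentiability

section Viscosity

variable {n : ℕ} {Ω : Set (En n)} {u : En n → ℝ} {x : En n}

theorem IsViscSupersol.not_isLocalMin (hsup : IsViscSupersol Ω u) (hx : x ∈ Ω) :
    ¬IsLocalMin u x := by
  intro hmin
  have hzero : quadTest x 0 0 0 0 - u = -u := by
    ext y
    simp [quadTest]
  have h := hsup _ (contDiff_quadTest x 0 0 0 0).contDiffOn x hx (hzero ▸ hmin.neg)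
  norm_num [infLap_quadTest] at h

theorem IsViscSubsol.false_of_le_corner (hsub : IsViscSubsol Ω u) (hx : x ∈ Ω) {Q e : En n}
    (he : ‖e‖ = 1) (hτ : ⟪e, Q⟫_ℝ ≠ 0) {κ C : ℝ} (hκ : 0 < κ)
    (hu : ∀ᶠ y in 𝓝 x,
      u y ≤ u x + ⟪Q, y - x⟫_ℝ - κ * |⟪e, y - x⟫_ℝ| + C * ‖y - x‖ ^ 2) : False := by
  set τ := ⟪e, Q⟫_ℝ
  have hτ2 : 0 < τ ^ 2 := by positivity
  -- the curvature `-M` across the corner is chosen so that `-Δ_∞ φ(x) = 2 + 2 (|C| - C) ‖Q‖²`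
  set M := (2 + 2 * |C| * ‖Q‖ ^ 2) / τ ^ 2
  have hMτ : M * τ ^ 2 = 2 + 2 * |C| * ‖Q‖ ^ 2 := div_mul_cancel₀ _ hτ2.ne'
  have hM : 0 < M := div_pos (by positivity) hτ2
  set φ := quadTest x Q C (-M / 2) e
  have hmin : IsLocalMin (φ - u) x := by
    filter_upwards [hu, ball_mem_nhds x (div_pos (mul_pos two_pos hκ) hM)] with y hy hball
    rw [mem_ball, dist_eq_norm] at hball
    have hs : |⟪e, y - x⟫_ℝ| ≤ ‖y - x‖ := by
      simpa [he] using abs_real_inner_le_norm e (y - x)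
    have hcorner : M / 2 * ⟪e, y - x⟫_ℝ ^ 2 ≤ κ * |⟪e, y - x⟫_ℝ| := by
      rw [← sq_abs, sq]
      have : M * |⟪e, y - x⟫_ℝ| ≤ 2 * κ := by
        rw [lt_div_iff₀ hM] at hball
        nlinarith
      nlinarith [abs_nonneg ⟪e, y - x⟫_ℝ]
    simp only [Pi.sub_apply, φ, quadTest, sub_self, inner_zero_right, real_inner_self_eq_norm_sq]
    nlinarith
  have h := hsub φ (contDiff_quadTest _ _ _ _ _).contDiffOn x hx hmin
  rw [infLap_quadTest, real_inner_self_eq_norm_sq] at h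
  nlinarith [le_abs_self C, sq_nonneg ‖Q‖]

theorem IsViscSubsol.false_of_le_min_inner (hsub : IsViscSubsol Ω u) (hx : x ∈ Ω)
    {q₁ q₂ : En n} (hq : q₁ ≠ q₂) {C : ℝ}
    (hu : ∀ᶠ y in 𝓝 x, u y ≤ u x + min ⟪q₁, y - x⟫_ℝ ⟪q₂, y - x⟫_ℝ + C * ‖y - x‖ ^ 2) :
    False := by
  have hq' : q₁ - q₂ ≠ 0 := sub_ne_zero.mpr hq
  set δ := ‖q₁ - q₂‖
  have hδ : 0 < δ := norm_pos_iff.mpr hq'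
  set e := δ⁻¹ • (q₁ - q₂)
  have he : ‖e‖ = 1 := norm_inv_norm_smul hq'
  have heq : ⟪e, q₁ - q₂⟫_ℝ = δ := by
    rw [real_inner_smul_left, real_inner_self_eq_norm_sq, sq, ← mul_assoc,
      inv_mul_cancel₀ hδ.ne', one_mul]
  -- the gradients `q₂ + l • (q₁ - q₂)` with `l ∈ [1/4, 3/4]` lie strictly inside the corner;
  -- their `e`-components are affine in `l`, so one of `l = 1/4, 1/2` gives a nonzero one
  obtain ⟨l, hl₁, hl₂, hτ⟩ : ∃ l : ℝ, 1 / 4 ≤ l ∧ l ≤ 3 / 4 ∧ ⟪e, q₂ + l • (q₁ - q₂)⟫_ℝ ≠ 0 := by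
    simp only [inner_add_right, real_inner_smul_right, heq]
    by_cases h : ⟪e, q₂⟫_ℝ + 1 / 2 * δ = 0
    · exact ⟨1 / 4, by norm_num, by norm_num, by linarith⟩
    · exact ⟨1 / 2, by norm_num, by norm_num, h⟩
  refine hsub.false_of_le_corner hx he hτ (C := C) (div_pos hδ four_pos) ?_
  filter_upwards [hu] with y hy
  have hδe : ⟪q₁ - q₂, y - x⟫_ℝ = δ * ⟪e, y - x⟫_ℝ := by
    rw [← real_inner_smul_left, smul_inv_smul₀ hδ.ne']
  have h₁ : ⟪q₁, y - x⟫_ℝ = ⟪q₂ + l • (q₁ - q₂), y - x⟫_ℝ + (1 - l) * δ * ⟪e, y - x⟫_ℝ := by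
    rw [inner_add_left, real_inner_smul_left, mul_assoc, ← hδe, inner_sub_left]
    ring
  have h₂ : ⟪q₂, y - x⟫_ℝ = ⟪q₂ + l • (q₁ - q₂), y - x⟫_ℝ - l * δ * ⟪e, y - x⟫_ℝ := by
    rw [inner_add_left, real_inner_smul_left, mul_assoc, ← hδe, inner_sub_left]
    ring
  rcases le_total 0 ⟪e, y - x⟫_ℝ with hs | hs
  · have := min_le_right ⟪q₁, y - x⟫_ℝ ⟪q₂, y - x⟫_ℝ
    rw [abs_of_nonneg hs]
    nlinarith [mul_nonneg (mul_nonneg (sub_nonneg.mpr hl₁) hδ.le) hs]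
  · have := min_le_left ⟪q₁, y - x⟫_ℝ ⟪q₂, y - x⟫_ℝ
    rw [abs_of_nonpos hs]
    nlinarith [mul_nonneg (mul_nonneg (sub_nonneg.mpr hl₂) hδ.le) (neg_nonneg.mpr hs)]

end Viscosity

section WebProfile

variable {n : ℕ} {Ω : Set (En n)} {u : En n → ℝ} {f : ℝ → ℝ}

theorem strictMonoOn_of_isViscSupersol (hop : IsOpen Ω) (hbd : Bornology.IsBounded Ω)
    (hfr : (frontier Ω).Nonempty) (hsup : IsViscSupersol Ω u)
    (hwf : ContinuousOn f (Icc 0 (rhoΩ Ω))) (hwu : ∀ x ∈ Ω, u x = f (dBd Ω x)) :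
    StrictMonoOn f (Icc 0 (rhoΩ Ω)) := by
  -- a minimum of `f` over `[a, ρ_Ω]` attained above `a` is a local minimum of `u`
  have hmin : ∀ a t, 0 ≤ a → a < t → t ≤ rhoΩ Ω → ∃ s ∈ Icc a (rhoΩ Ω), f s < f t := by
    intro a t ha hat htρ
    by_contra! hft
    obtain ⟨xm, hxm, e, he, hxt⟩ := exists_dBd_add_smul_eq hop hbd hfr (ha.trans hat.le) htρ
    set x := xm + (rhoΩ Ω - t) • e
    have hxΩ : x ∈ Ω := add_smul_mem_of_mem_highRidge hop hbd hfr hxm he (by linarith)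
      (by linarith)
    refine hsup.not_isLocalMin hxΩ ?_
    have hnhds : ball x (dBd Ω x) ∩ {y | a < dBd Ω y} ∈ 𝓝 x :=
      isOpen_ball.inter (isOpen_lt continuous_const continuous_dBd) |>.mem_nhds
        ⟨mem_ball_self (by linarith), show a < dBd Ω x by linarith⟩
    filter_upwards [hnhds] with y ⟨hyb, hya⟩
    have hyΩ := ball_dBd_subset hop hxΩ hyb
    rw [hwu x hxΩ, hwu y hyΩ, hxt]
    exact hft _ ⟨hya.le, dBd_le_rhoΩ hbd (subset_closure hyΩ)⟩
  intro a ha b hb hab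
  obtain ⟨tm, htm, htmin⟩ := isCompact_Icc.exists_isMinOn (nonempty_Icc.mpr (hab.le.trans hb.2))
    (hwf.mono (Icc_subset_Icc_left ha.1))
  have htma : tm = a := by
    by_contra h
    obtain ⟨s, hs, hfs⟩ := hmin a tm ha.1 (htm.1.lt_of_ne' h) htm.2
    exact (htmin hs).not_gt hfs
  by_contra! hba
  obtain ⟨s, hs, hfs⟩ := hmin a b ha.1 hab hb.2
  exact (hba.trans (htma ▸ htmin hs)).not_gt hfs

theorem isLocalMax_quadTest_sub_of_affine_le (hop : IsOpen Ω) (hbd : Bornology.IsBounded Ω)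
    (hfr : (frontier Ω).Nonempty) (hwu : ∀ x ∈ Ω, u x = f (dBd Ω x))
    (hmono : MonotoneOn f (Icc 0 (rhoΩ Ω))) {xm e : En n} (hxm : xm ∈ highRidge Ω)
    (he : ‖e‖ = 1) {t p δ : ℝ} (ht : 0 < t) (htρ : t < rhoΩ Ω) (hp : 0 ≤ p) (hδ : 0 < δ)
    (hx₀ : dBd Ω (xm + (rhoΩ Ω - t) • e) = t)
    (hf : ∀ s ∈ Icc 0 (rhoΩ Ω), |s - t| < δ → f t + p * (s - t) ≤ f s) :
    IsLocalMax (quadTest (xm + (rhoΩ Ω - t) • e) (-(p • e)) (-(p / (rhoΩ Ω - t)))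
      (p / (rhoΩ Ω - t)) e - u) (xm + (rhoΩ Ω - t) • e) := by
  set r := rhoΩ Ω - t
  set x₀ := xm + r • e
  have hr : 0 < r := sub_pos.mpr htρ
  have hx₀Ω : x₀ ∈ Ω := add_smul_mem_of_mem_highRidge hop hbd hfr hxm he hr.le (by linarith)
  filter_upwards [ball_mem_nhds x₀ (lt_min (half_pos hr) (lt_min ht hδ))] with y hy
  rw [mem_ball, dist_eq_norm, lt_min_iff, lt_min_iff] at hy
  set v := y - x₀
  have hyxm : y - xm = r • e + v := by simp only [v, x₀]; abel
  have hev : |⟪e, v⟫_ℝ| ≤ ‖v‖ := by simpa [he] using abs_real_inner_le_norm e v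
  -- the cone `σ = ρ_Ω - |y - xm|` lies below `d_∂Ω` and above its second-order expansion at `x₀`
  have hcone := norm_smul_add_le_of_norm_eq_one he hr (v := v) (by linarith [(abs_le.mp hev).1])
  have htri : |‖r • e + v‖ - r| ≤ ‖v‖ := by
    simpa [norm_smul, he, abs_of_pos hr] using abs_norm_sub_norm_le (r • e + v) (r • e)
  rw [← hyxm] at hcone htri
  have hyΩ : y ∈ Ω := ball_rhoΩ_subset hop hbd hfr hxm (by
    rw [mem_ball, dist_eq_norm]; linarith [(abs_le.mp htri).2])
  set σ := rhoΩ Ω - ‖y - xm‖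
  have hσ : σ ∈ Icc 0 (rhoΩ Ω) :=
    ⟨by linarith [(abs_le.mp htri).2], by linarith [norm_nonneg (y - xm)]⟩
  have hσy : σ ≤ dBd Ω y := by
    have := dBd_le_dBd_add_dist (Ω := Ω) (x := xm) (y := y)
    rw [hxm.2, dist_comm, dist_eq_norm] at this
    linarith
  have hfσ := hf σ hσ (abs_lt.mpr ⟨by linarith [abs_le.mp htri], by linarith [abs_le.mp htri]⟩)
  have hfy : f σ ≤ f (dBd Ω y) :=
    hmono hσ ⟨dBd_nonneg, dBd_le_rhoΩ hbd (subset_closure hyΩ)⟩ hσy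
  have hcone' : p * (‖y - xm‖ - r) ≤ p * (⟪e, v⟫_ℝ + (‖v‖ ^ 2 - ⟪e, v⟫_ℝ ^ 2) / r) := by
    gcongr
    linarith
  have hψ : quadTest x₀ (-(p • e)) (-(p / r)) (p / r) e y =
      -p * ⟪e, v⟫_ℝ - p * ((‖v‖ ^ 2 - ⟪e, v⟫_ℝ ^ 2) / r) := by
    simp only [quadTest, inner_neg_left, real_inner_smul_left, real_inner_self_eq_norm_sq]
    ring
  have hψ₀ : quadTest x₀ (-(p • e)) (-(p / r)) (p / r) e x₀ = 0 := by simp [quadTest]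
  simp only [Pi.sub_apply, hwu y hyΩ, hwu x₀ hx₀Ω, hx₀, hψ, hψ₀]
  linarith

theorem false_of_affine_le_of_isViscSupersol (hop : IsOpen Ω) (hbd : Bornology.IsBounded Ω)
    (hfr : (frontier Ω).Nonempty) (hsup : IsViscSupersol Ω u)
    (hwu : ∀ x ∈ Ω, u x = f (dBd Ω x)) (hmono : MonotoneOn f (Icc 0 (rhoΩ Ω)))
    {t p δ : ℝ} (ht : 0 < t) (htρ : t < rhoΩ Ω) (hp : 0 ≤ p) (hδ : 0 < δ)
    (hf : ∀ s ∈ Icc 0 (rhoΩ Ω), |s - t| < δ → f t + p * (s - t) ≤ f s) : False := by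
  obtain ⟨xm, hxm, e, he, hx₀⟩ := exists_dBd_add_smul_eq hop hbd hfr ht.le htρ.le
  have h := hsup _ (contDiff_quadTest _ _ _ _ _).contDiffOn _
    (add_smul_mem_of_mem_highRidge hop hbd hfr hxm he (by linarith) (by linarith))
    (isLocalMax_quadTest_sub_of_affine_le hop hbd hfr hwu hmono hxm he ht htρ hp hδ hx₀ hf)
  -- the Hessian `-(2p/r)(1 - e ⊗ e)` vanishes on the gradient `-p e`, so `-Δ_∞ ψ(x₀) = 0`
  simp only [infLap_quadTest, inner_neg_left, inner_neg_right, real_inner_smul_right,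
    real_inner_self_eq_norm_sq, norm_smul, he] at h
  ring_nf at h
  rw [Real.norm_eq_abs, sq_abs] at h
  linarith

theorem concaveOn_of_isViscSupersol (hop : IsOpen Ω) (hbd : Bornology.IsBounded Ω)
    (hfr : (frontier Ω).Nonempty) (hsup : IsViscSupersol Ω u)
    (hwf : ContinuousOn f (Icc 0 (rhoΩ Ω))) (hwu : ∀ x ∈ Ω, u x = f (dBd Ω x)) :
    ConcaveOn ℝ (Icc 0 (rhoΩ Ω)) f := by
  have hmono := strictMonoOn_of_isViscSupersol hop hbd hfr hsup hwf hwu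
  refine concaveOn_iff_slope_anti_adjacent.mpr ⟨convex_Icc 0 _, fun a b c ha hc hab hbc => ?_⟩
  by_contra! hslope
  -- `f b` lies below the chord over `[a, c]`, so `f` minus the chord has an interior minimum
  set p := (f c - f a) / (c - a)
  have hca : 0 < c - a := by linarith
  have hp : 0 ≤ p := div_nonneg (sub_nonneg.mpr (hmono.monotoneOn ha hc (hab.trans hbc).le)) hca.le
  have hpca : p * (c - a) = f c - f a := div_mul_cancel₀ _ hca.ne'
  rw [div_lt_div_iff₀ (by linarith) (by linarith)] at hslope
  have hgb : f b - p * b < f a - p * a := by nlinarith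
  have hg : ContinuousOn (fun s => f s - p * s) (Icc a c) :=
    (hwf.mono (Icc_subset_Icc ha.1 hc.2)).sub (continuousOn_const.mul continuousOn_id)
  obtain ⟨s₀, hs₀, hmin⟩ := isCompact_Icc.exists_isMinOn (nonempty_Icc.mpr (hab.trans hbc).le) hg
  have hs₀b : f s₀ - p * s₀ ≤ f b - p * b := hmin ⟨hab.le, hbc.le⟩
  have has₀ : a < s₀ := hs₀.1.lt_of_ne (by rintro rfl; linarith)
  have hs₀c : s₀ < c := hs₀.2.lt_of_ne (by rintro rfl; linarith)
  refine false_of_affine_le_of_isViscSupersol hop hbd hfr hsup hwu hmono.monotoneOn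
    (ha.1.trans_lt has₀) (hs₀c.trans_le hc.2) hp (lt_min (sub_pos.mpr has₀) (sub_pos.mpr hs₀c))
    fun s _ hs => ?_
  obtain ⟨h₁, h₂⟩ := lt_min_iff.mp hs
  rw [abs_lt] at h₁ h₂
  have : f s₀ - p * s₀ ≤ f s - p * s := hmin ⟨by linarith, by linarith⟩
  linarith

end WebProfile

section SingularSet

variable {n : ℕ} {Ω : Set (En n)} {u : En n → ℝ} {f : ℝ → ℝ}

theorem highRidge_subset_singSet (hop : IsOpen Ω) (hbd : Bornology.IsBounded Ω)
    (hfr : (frontier Ω).Nonempty) : highRidge Ω ⊆ SingSet Ω := by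
  intro x hx
  refine ⟨highRidge_subset hop hbd hfr hx, fun hd => ?_⟩
  obtain ⟨ξ, hξ⟩ := projSet_frontier_nonempty hbd hfr x
  have hmax : IsLocalMax (dBd Ω) x := by
    filter_upwards [ball_mem_nhds x (rhoΩ_pos hop hbd hfr)] with y hy
    rw [hx.2]
    exact dBd_le_rhoΩ hbd (subset_closure (ball_rhoΩ_subset hop hbd hfr hx hy))
  have h := fderiv_dBd_sub_of_mem_projSet hd hξ
  rw [hmax.fderiv_eq_zero, zero_apply, hx.2] at h
  linarith [rhoΩ_pos hop hbd hfr]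

theorem eventually_le_add_inner_of_le_affine (hop : IsOpen Ω) (hbd : Bornology.IsBounded Ω)
    (hwu : ∀ x ∈ Ω, u x = f (dBd Ω x)) {x ξ : En n} (hx : x ∈ Ω)
    (hξ : ξ ∈ projSet (frontier Ω) x) {a : ℝ} (ha0 : 0 ≤ a)
    (ha : ∀ s ∈ Icc 0 (rhoΩ Ω), f s ≤ f (dBd Ω x) + a * (s - dBd Ω x)) :
    ∀ᶠ y in 𝓝 x,
      u y ≤ u x + ⟪a • (‖x - ξ‖⁻¹ • (x - ξ)), y - x⟫_ℝ + a / dBd Ω x * ‖y - x‖ ^ 2 := by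
  have ht : 0 < dBd Ω x := dBd_pos hop ⟨ξ, hξ.1⟩ hx
  filter_upwards [ball_mem_nhds x (half_pos ht)] with y hy
  rw [mem_ball, dist_eq_norm] at hy
  have hyΩ : y ∈ Ω := ball_dBd_subset hop hx (by rw [mem_ball, dist_eq_norm]; linarith)
  have hdy := dBd_le_quadratic_of_mem_projSet hξ ht hy.le
  have hfy := ha _ ⟨dBd_nonneg, dBd_le_rhoΩ hbd (subset_closure hyΩ)⟩
  have hgrow : a * (dBd Ω y - dBd Ω x) ≤
      a * (⟪‖x - ξ‖⁻¹ • (x - ξ), y - x⟫_ℝ + ‖y - x‖ ^ 2 / dBd Ω x) := by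
    gcongr
    linarith
  rw [hwu y hyΩ, hwu x hx, real_inner_smul_left]
  have : a / dBd Ω x * ‖y - x‖ ^ 2 = a * (‖y - x‖ ^ 2 / dBd Ω x) := by ring
  linarith

theorem singSet_subset_highRidge (hop : IsOpen Ω) (hbd : Bornology.IsBounded Ω)
    (hfr : (frontier Ω).Nonempty) (hsub : IsViscSubsol Ω u) (hsup : IsViscSupersol Ω u)
    (hwf : ContinuousOn f (Icc 0 (rhoΩ Ω))) (hwu : ∀ x ∈ Ω, u x = f (dBd Ω x)) :
    SingSet Ω ⊆ highRidge Ω := by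
  rintro x ⟨hx, hnd⟩
  refine ⟨subset_closure hx, (dBd_le_rhoΩ hbd (subset_closure hx)).eq_or_lt.resolve_right
    fun hxρ => ?_⟩
  set t := dBd Ω x
  have ht : 0 < t := dBd_pos hop hfr hx
  obtain ⟨ξ, hξ⟩ := projSet_frontier_nonempty hbd hfr x
  obtain ⟨ζ, hζ, hζξ⟩ : ∃ ζ ∈ projSet (frontier Ω) x, ζ ≠ ξ := by
    by_contra! h
    exact hnd (hasFDerivAt_dBd_of_projSet_eq_singleton hop hbd hx
      (eq_singleton_iff_unique_mem.mpr ⟨hξ, h⟩)).differentiableAt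
  obtain ⟨a, ha⟩ := (concaveOn_of_isViscSupersol hop hbd hfr hsup hwf hwu).exists_le_affine
    (t := t) (by rw [interior_Icc]; exact ⟨ht, hxρ⟩)
  have hρ : rhoΩ Ω ∈ Icc 0 (rhoΩ Ω) := ⟨(rhoΩ_pos hop hbd hfr).le, le_rfl⟩
  have hapos : 0 < a := by
    have := strictMonoOn_of_isViscSupersol hop hbd hfr hsup hwf hwu ⟨ht.le, hxρ.le⟩ hρ hxρ
    nlinarith [ha _ hρ]
  have hnorm : ∀ η ∈ projSet (frontier Ω) x, ‖x - η‖ = t := fun η hη => by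
    rw [← dist_eq_norm, dist_eq_dBd_of_mem_projSet hη]
  have hq : a • (‖x - ξ‖⁻¹ • (x - ξ)) ≠ a • (‖x - ζ‖⁻¹ • (x - ζ)) := by
    rw [hnorm ξ hξ, hnorm ζ hζ, smul_right_injective _ hapos.ne' |>.ne_iff,
      smul_right_injective _ (inv_ne_zero ht.ne') |>.ne_iff, Ne, sub_right_inj]
    exact hζξ.symm
  refine hsub.false_of_le_min_inner hx hq (C := a / t) ?_
  filter_upwards [eventually_le_add_inner_of_le_affine hop hbd hwu hx hξ hapos.le ha,
    eventually_le_add_inner_of_le_affine hop hbd hwu hx hζ hapos.le ha] with y hyξ hyζ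
  rcases min_choice ⟪a • (‖x - ξ‖⁻¹ • (x - ξ)), y - x⟫_ℝ ⟪a • (‖x - ζ‖⁻¹ • (x - ζ)), y - x⟫_ℝ
    with h | h <;> rw [h]
  exacts [hyξ, hyζ]

end SingularSet

section Tube

variable {n : ℕ} {Ω : Set (En n)} {x z : En n}

theorem not_isLocalMax_dBd_sub_mul_dist (hbd : Bornology.IsBounded Ω)
    (hfr : (frontier Ω).Nonempty) (hz : 0 < dBd Ω z) (hd : DifferentiableAt ℝ (dBd Ω) z)
    {α : ℝ} (hα0 : 0 ≤ α) (hα1 : α < 1) : ¬IsLocalMax (fun y => dBd Ω y - α * dist y x) z := by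
  intro hmax
  obtain ⟨ξ, hξ⟩ := projSet_frontier_nonempty hbd hfr z
  have hw : ‖z - ξ‖ = dBd Ω z := by rw [← dist_eq_norm, dist_eq_dBd_of_mem_projSet hξ]
  have hderiv : fderiv ℝ (dBd Ω) z (z - ξ) = dBd Ω z := by
    rw [← neg_sub, map_neg, fderiv_dBd_sub_of_mem_projSet hd hξ, neg_neg]
  -- moving away from the foot raises `d_∂Ω` at unit rate, the penalty only at rate `α`
  have hslope : ∀ᶠ s in 𝓝[>] (0 : ℝ),
      s⁻¹ * (dBd Ω (z + s • (z - ξ)) - dBd Ω z) ≤ α * dBd Ω z := by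
    have hline : Tendsto (fun s : ℝ => z + s • (z - ξ)) (𝓝 0) (𝓝 z) :=
      Continuous.tendsto' (by fun_prop) 0 z (by simp)
    filter_upwards [(hline.eventually hmax).filter_mono nhdsWithin_le_nhds,
      self_mem_nhdsWithin] with s hs (hs0 : 0 < s)
    have hdist : dist (z + s • (z - ξ)) x ≤ s * dBd Ω z + dist z x := by
      calc _ ≤ dist (z + s • (z - ξ)) z + dist z x := dist_triangle _ _ _
        _ = _ := by
          rw [dist_eq_norm, add_sub_cancel_left, norm_smul, Real.norm_of_nonneg hs0.le, hw]
    rw [inv_mul_le_iff₀ hs0]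
    nlinarith [mul_le_mul_of_nonneg_left hdist hα0]
  have := le_of_tendsto (tendsto_slope_fderiv hd (z - ξ)) hslope
  rw [hderiv] at this
  nlinarith

theorem exists_mem_highRidge_dist_le (hop : IsOpen Ω) (hbd : Bornology.IsBounded Ω)
    (hfr : (frontier Ω).Nonempty) (hsing : SingSet Ω ⊆ highRidge Ω) (hx : x ∈ Ω) :
    ∃ y ∈ highRidge Ω, dist x y ≤ rhoΩ Ω - dBd Ω x := by
  set t := dBd Ω x
  set R := rhoΩ Ω - t
  set A := closedBall x R ∩ closure Ω
  have hA : IsCompact A := (isCompact_closedBall x R).inter_right isClosed_closure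
  have hxA : x ∈ A :=
    ⟨mem_closedBall_self (sub_nonneg.mpr (dBd_le_rhoΩ hbd (subset_closure hx))), subset_closure hx⟩
  obtain ⟨ym, hymA, hymax⟩ := hA.exists_isMaxOn ⟨x, hxA⟩ continuous_dBd.continuousOn
  suffices hm : dBd Ω ym = rhoΩ Ω from ⟨ym, ⟨hymA.2, hm⟩, dist_comm x ym ▸ hymA.1⟩
  by_contra hm
  set m := dBd Ω ym
  have hmρ : m < rhoΩ Ω := (dBd_le_rhoΩ hbd hymA.2).lt_of_ne hm
  have htm : t ≤ m := hymax hxA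
  have hR : 0 < R := by linarith
  -- a penalty rate `α < 1` with `α R > m - t` pushes every maximizer of `F` off the sphere
  set α := (m - t + R) / (2 * R)
  have hαR : α * R = (m - t + R) / 2 := by
    rw [div_mul_eq_mul_div, mul_div_mul_right _ _ hR.ne']
  have hα0 : 0 ≤ α := div_nonneg (by linarith) (by linarith)
  have hα1 : α < 1 := (div_lt_one (by linarith)).mpr (by linarith)
  set F := fun y => dBd Ω y - α * dist y x
  obtain ⟨z, hzA, hzmax⟩ := hA.exists_isMaxOn ⟨x, hxA⟩
    (continuous_dBd.sub (continuous_const.mul (continuous_id.dist continuous_const))).continuousOn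
  have hFz : F x ≤ F z := hzmax hxA
  simp only [F, dist_self, mul_zero, sub_zero] at hFz
  have hzm : dBd Ω z ≤ m := hymax hzA
  have hzR : dist z x < R := by
    refine (mem_closedBall.mp hzA.1).lt_of_ne fun h => ?_
    rw [h, hαR] at hFz
    linarith
  have hzpos : 0 < dBd Ω z := by nlinarith [dBd_pos hop hfr hx, dist_nonneg (x := z) (y := x)]
  have hzΩ : z ∈ Ω := mem_of_dBd_pos hop hzA.2 hzpos
  have hzd : DifferentiableAt ℝ (dBd Ω) z := by
    by_contra hnd
    linarith [(hsing ⟨hzΩ, hnd⟩).2]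
  refine not_isLocalMax_dBd_sub_mul_dist (x := x) hbd hfr hzpos hzd hα0 hα1 ?_
  filter_upwards [(hop.inter isOpen_ball).mem_nhds ⟨hzΩ, mem_ball.mpr hzR⟩] with y hy
  exact hzmax ⟨mem_closedBall.mpr (mem_ball.mp hy.2).le, subset_closure hy.1⟩

theorem eq_setOf_infDist_highRidge_lt (hop : IsOpen Ω) (hbd : Bornology.IsBounded Ω)
    (hfr : (frontier Ω).Nonempty) (hsing : SingSet Ω ⊆ highRidge Ω) :
    Ω = {x | infDist x (highRidge Ω) < rhoΩ Ω} := by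
  ext x
  constructor
  · intro hx
    obtain ⟨y, hy, hxy⟩ := exists_mem_highRidge_dist_le hop hbd hfr hsing hx
    exact (infDist_le_dist_of_mem hy).trans_lt (hxy.trans_lt (by linarith [dBd_pos hop hfr hx]))
  · intro hx
    obtain ⟨y, hy, hxy⟩ := (infDist_lt_iff (highRidge_nonempty hbd hfr)).mp hx
    exact ball_rhoΩ_subset hop hbd hfr hy (mem_ball.mpr hxy)

end Tube

theorem planar_tubular_neighborhood_general (Ω : Set (En 2)) (hne : Ω.Nonempty)
    (hop : IsOpen Ω) (hbd : Bornology.IsBounded Ω)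
    (u : En 2 → ℝ) (hu : IsDirichletSol Ω u) (hweb : IsWebOn Ω u) :
    cutLocus Ω = highRidge Ω ∧
      Ω = {x : En 2 | Metric.infDist x (cutLocus Ω) < rhoΩ Ω} := by
  obtain ⟨-, -, -, hsub, hsup⟩ := hu
  obtain ⟨f, hwf, hwu⟩ := hweb
  have hfr : (frontier Ω).Nonempty :=
    nonempty_frontier_iff.mpr ⟨hne, fun h => NormedSpace.unbounded_univ ℝ (En 2) (h ▸ hbd)⟩
  have hsing : SingSet Ω ⊆ highRidge Ω :=
    singSet_subset_highRidge hop hbd hfr hsub hsup hwf fun x hx => hwu x (subset_closure hx)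
  have hcut : cutLocus Ω = highRidge Ω := by
    rw [cutLocus, hsing.antisymm (highRidge_subset_singSet hop hbd hfr),
      isClosed_highRidge.closure_eq]
  exact ⟨hcut, hcut ▸ eq_setOf_infDist_highRidge_lt hop hbd hfr hsing⟩

/-- In dimension 2, if the Dirichlet problem admits a web viscosity solution,
then `Ω` is the open tubular neighborhood of radius `ρ_Ω` of `S := Cut(Ω) = high(Ω)`. -/
theorem planar_tubular_neighborhood (Ω : Set (En 2)) (hne : Ω.Nonempty)
    (hop : IsOpen Ω) (hbd : Bornology.IsBounded Ω) (hconn : IsConnected Ω)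
    (u : En 2 → ℝ) (hu : IsDirichletSol Ω u) (hweb : IsWebOn Ω u) :
    cutLocus Ω = highRidge Ω ∧
      Ω = {x : En 2 | Metric.infDist x (cutLocus Ω) < rhoΩ Ω} :=
  planar_tubular_neighborhood_general Ω hne hop hbd u hu hweb
end

section
/- Let Ω ⊂ ℝⁿ be an open bounded convex set and let x₀ ∈ Σ(Ω). Then for every p ∈ D⁺d_∂Ω(x₀) with |p| < 1 there exist a constant K > 0 and a unit vector ζ ∈ ℝⁿ such that d_∂Ω(x) ≤ d_∂Ω(x₀) + ⟨p, x−x₀⟩ − K·|⟨ζ, x−x₀⟩| for all x ∈ Ω. -/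
open scoped InnerProductSpace
open Metric Set Filter

/-!
On a convex domain `d = d_∂Ω` is concave, so every element of `D⁺d(x₀)` is a global
supergradient on `Ω`, and so is every unit normal `(x₀ - y) / d(x₀)` at a nearest boundary
point `y`. Conversely `D⁺d(x₀)` lies in the convex hull of these unit normals: if `p` could be
separated from it by a direction `v`, then along `x₀ + t v` the nearest boundary points would
make `d` grow faster than the bound `d(x₀) + t ⟪p, v⟫ + o(t)` allows. A point `p` of that hull
with `‖p‖ < 1` is not one of its extreme points (which are unit vectors), so `p ± u` are still
global supergradients for some `u ≠ 0`; adding the two inequalities gives the estimate with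
`K = ‖u‖` and `ζ = u / ‖u‖`.
-/

open Topology

section NormedSpace

variable {E : Type*} [NormedAddCommGroup E] [NormedSpace ℝ E]

theorem Metric.ball_infDist_frontier_subset {s : Set E} (hs : IsOpen s) {x : E} (hx : x ∈ s) :
    ball x (infDist x (frontier s)) ⊆ s := by
  intro z hz
  have hS : ∀ w ∈ segment ℝ x z, w ∉ frontier s := fun w hw hwF =>
    (infDist_le_dist_of_mem hwF).not_gt <|
      (mem_closedBall'.1 (segment_subset_closedBall_left x z hw)).trans_lt (mem_ball'.1 hz)
  refine (convex_segment x z).isPreconnected.subset_of_closure_inter_subset hs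
    ⟨x, left_mem_segment ℝ x z, hx⟩ ?_ (right_mem_segment ℝ x z)
  rintro w ⟨hws, hwS⟩
  rw [closure_eq_self_union_frontier] at hws
  exact hws.resolve_right (hS w hwS)

theorem concaveOn_infDist_frontier {s : Set E} (hs : IsOpen s) (hconv : Convex ℝ s) :
    ConcaveOn ℝ s fun x => infDist x (frontier s) := by
  rcases (frontier s).eq_empty_or_nonempty with hF | hF
  · simpa [hF] using concaveOn_const (0 : ℝ) hconv
  refine ⟨hconv, fun x hx y hy a b ha hb hab => ?_⟩
  simp only [smul_eq_mul]
  set r := a * infDist x (frontier s) + b * infDist y (frontier s)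
  refine (le_infDist hF).2 fun q hq => le_of_not_gt fun hqr => ?_
  have hr : 0 < r := dist_nonneg.trans_lt hqr
  obtain ⟨h, rfl⟩ : ∃ h, q = a • x + b • y + h := ⟨q - (a • x + b • y), by abel⟩
  have hh : ‖h‖ < r := by rwa [dist_comm, dist_eq_norm, add_sub_cancel_left] at hqr
  -- `ball (a • x + b • y) r ⊆ a • ball x (d x) + b • ball y (d y) ⊆ s`
  have hmem : ∀ w ∈ s, w + (infDist w (frontier s) / r) • h ∈ s := by
    intro w hw
    rcases (infDist_nonneg (x := w) (s := frontier s)).eq_or_lt with h0 | hpos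
    · simpa [← h0] using hw
    refine ball_infDist_frontier_subset hs hw ?_
    rw [mem_ball, dist_eq_norm, add_sub_cancel_left, norm_smul,
      Real.norm_of_nonneg (by positivity)]
    calc infDist w (frontier s) / r * ‖h‖ < infDist w (frontier s) / r * r := by gcongr
      _ = infDist w (frontier s) := by field_simp
  have hdecomp : a • x + b • y + h = a • (x + (infDist x (frontier s) / r) • h) +
      b • (y + (infDist y (frontier s) / r) • h) := by
    have hsum : a * (infDist x (frontier s) / r) + b * (infDist y (frontier s) / r) = 1 := by
      rw [mul_div_assoc', mul_div_assoc', ← add_div, div_self hr.ne']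
    rw [smul_add, smul_add, smul_smul, smul_smul, add_add_add_comm, ← add_smul, hsum, one_smul]
  exact (Set.eq_empty_iff_forall_notMem.1 hs.inter_frontier_eq _)
    ⟨hdecomp ▸ hconv (hmem x hx) (hmem y hy) ha hb hab, hq⟩

theorem IsCompact.convexHull [FiniteDimensional ℝ E] {s : Set E} (hs : IsCompact s) :
    IsCompact (_root_.convexHull ℝ s) := by
  rcases s.eq_empty_or_nonempty with rfl | ⟨v₀, hv₀⟩
  · simp
  set N := Module.finrank ℝ E + 1
  -- Carathéodory: every point of the hull is a convex combination of `N` points of `s`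
  suffices _root_.convexHull ℝ s =
      (fun q : (Fin N → ℝ) × (Fin N → E) => ∑ i, q.1 i • q.2 i) ''
        (stdSimplex ℝ (Fin N) ×ˢ univ.pi fun _ => s) by
    rw [this]
    exact ((isCompact_stdSimplex ℝ (Fin N)).prod (isCompact_univ_pi fun _ => hs)).image
      (by fun_prop)
  refine Subset.antisymm (fun x hx => ?_) ?_
  · obtain ⟨ι, _, z, w, hzs, hai, hw0, hw1, rfl⟩ :=
      eq_pos_convex_span_of_mem_convexHull hx
    have hcard : Fintype.card ι ≤ Fintype.card (Fin N) := by
      simpa [N] using hai.card_le_finrank_succ.trans (Nat.succ_le_succ (Submodule.finrank_le _))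
    obtain ⟨e⟩ := Function.Embedding.nonempty_of_card_le hcard
    have hext : ∀ j ∉ range e, Function.extend e w 0 j = 0 := fun j hj =>
      Function.extend_apply' _ _ _ (by simpa using hj)
    refine ⟨(Function.extend e w 0, Function.extend e z fun _ => v₀),
      ⟨⟨fun j => ?_, ?_⟩, ?_⟩, ?_⟩
    · by_cases hj : j ∈ range e
      · obtain ⟨i, rfl⟩ := hj
        simpa [e.injective.extend_apply] using (hw0 i).le
      · simp [hext j hj]
    · rw [← hw1]
      exact (Fintype.sum_of_injective e e.injective w _ hext
        fun i => (e.injective.extend_apply _ _ _).symm).symm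
    · intro j _
      by_cases hj : j ∈ range e
      · obtain ⟨i, rfl⟩ := hj
        simpa [e.injective.extend_apply] using hzs (mem_range_self i)
      · simpa [Function.extend_apply' _ _ _ (by simpa using hj)] using hv₀
    · refine (Fintype.sum_of_injective e e.injective (fun i => w i • z i) _ (fun j hj => ?_)
        fun i => by simp [e.injective.extend_apply]).symm
      simp [hext j hj]
  · rintro _ ⟨⟨w, z⟩, ⟨⟨hw0, hw1⟩, hz⟩, rfl⟩
    exact mem_convexHull_of_exists_fintype w z hw0 hw1 (fun i => hz i (mem_univ i)) rfl

theorem Convex.exists_add_sub_mem_of_notMem_extremePoints {C : Set E} (hC : Convex ℝ C)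
    {p : E} (hp : p ∈ C) (hpe : p ∉ C.extremePoints ℝ) :
    ∃ u ≠ 0, p + u ∈ C ∧ p - u ∈ C := by
  obtain ⟨x₁, hx₁, x₂, hx₂, hpseg, hne⟩ :
      ∃ x₁ ∈ C, ∃ x₂ ∈ C, p ∈ openSegment ℝ x₁ x₂ ∧ x₁ ≠ x₂ := by
    simp only [mem_extremePoints, hp, true_and, not_forall] at hpe
    obtain ⟨x₁, hx₁, x₂, hx₂, hpseg, hne⟩ := hpe
    refine ⟨x₁, hx₁, x₂, hx₂, hpseg, fun h => hne ?_⟩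
    subst h
    rw [openSegment_same, mem_singleton_iff] at hpseg
    exact ⟨hpseg.symm, hpseg.symm⟩
  rw [openSegment_eq_image] at hpseg
  obtain ⟨θ, ⟨hθ0, hθ1⟩, rfl⟩ := hpseg
  set s := min θ (1 - θ)
  have hs : 0 < s := lt_min hθ0 (sub_pos.2 hθ1)
  have hmem : ∀ t ∈ Icc (0 : ℝ) 1, (1 - θ) • x₁ + θ • x₂ + (t - θ) • (x₂ - x₁) ∈ C := by
    intro t ht
    convert hC.add_smul_sub_mem hx₁ hx₂ ht using 1
    module
  refine ⟨s • (x₂ - x₁), smul_ne_zero hs.ne' (sub_ne_zero.2 hne.symm), ?_, ?_⟩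
  · convert hmem (θ + s) ⟨by linarith, by linarith [min_le_right θ (1 - θ)]⟩ using 1
    module
  · convert hmem (θ - s) ⟨by linarith [min_le_left θ (1 - θ)], by linarith⟩ using 1
    module

end NormedSpace

theorem convex_setOf_forall_le_add_inner {E : Type*} [NormedAddCommGroup E]
    [InnerProductSpace ℝ E] (s : Set E) (u : E → ℝ) (x₀ : E) :
    Convex ℝ {q : E | ∀ x ∈ s, u x ≤ u x₀ + ⟪q, x - x₀⟫_ℝ} := by
  intro q₁ h₁ q₂ h₂ a b ha hb hab x hx
  rw [inner_add_left, real_inner_smul_left, real_inner_smul_left]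
  have hux : u x = a * u x + b * u x := by rw [← add_mul, hab, one_mul]
  have hux₀ : u x₀ = a * u x₀ + b * u x₀ := by rw [← add_mul, hab, one_mul]
  nlinarith [mul_le_mul_of_nonneg_left (h₁ x hx) ha, mul_le_mul_of_nonneg_left (h₂ x hx) hb]

section Superdifferential

variable {n : ℕ}

theorem eventually_le_add_mul_of_mem_superDiff {u : En n → ℝ} {x p : En n}
    (hp : p ∈ superDiff u x) (v : En n) {ε : ℝ} (hε : 0 < ε) :
    ∀ᶠ t in 𝓝[>] (0 : ℝ), u (x + t • v) ≤ u x + t * (⟪p, v⟫_ℝ + ε) := by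
  have hray : Tendsto (fun t : ℝ => x + t • v) (𝓝[>] 0) (𝓝 x) := by
    have : Continuous fun t : ℝ => x + t • v := by fun_prop
    simpa using (this.tendsto 0).mono_left nhdsWithin_le_nhds
  filter_upwards [hray.eventually (hp (ε / (‖v‖ + 1)) (by positivity)), self_mem_nhdsWithin]
    with t ht (htpos : 0 < t)
  rw [add_sub_cancel_left, real_inner_smul_right, norm_smul, Real.norm_of_nonneg htpos.le] at ht
  have hsmall : ε / (‖v‖ + 1) * (t * ‖v‖) ≤ t * ε := by
    rw [div_mul_eq_mul_div, div_le_iff₀ (by positivity)]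
    nlinarith [norm_nonneg v]
  linarith

theorem ConcaveOn.le_add_inner_of_mem_superDiff {s : Set (En n)} {u : En n → ℝ}
    (hu : ConcaveOn ℝ s u) {x₀ p x : En n} (hx₀ : x₀ ∈ s) (hp : p ∈ superDiff u x₀)
    (hx : x ∈ s) : u x ≤ u x₀ + ⟪p, x - x₀⟫_ℝ := by
  refine le_of_forall_pos_le_add fun ε hε => ?_
  obtain ⟨t, hle, ht0, ht1⟩ :=
    ((eventually_le_add_mul_of_mem_superDiff hp (x - x₀) hε).and
      (Ioo_mem_nhdsGT one_pos)).exists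
  have hconc : (1 - t) * u x₀ + t * u x ≤ u (x₀ + t • (x - x₀)) := by
    have hcomb : x₀ + t • (x - x₀) = (1 - t) • x₀ + t • x := by module
    simpa only [hcomb, smul_eq_mul] using hu.2 hx₀ hx (sub_nonneg.2 ht1.le) ht0.le (by ring)
  have : t * u x ≤ t * (u x₀ + ⟪p, x - x₀⟫_ℝ + ε) := by linarith
  exact le_of_mul_le_mul_left this ht0

end Superdifferential

section UnitNormals

variable {n : ℕ}

def unitNormals (F : Set (En n)) (x : En n) : Set (En n) :=
  (fun y => (infDist x F)⁻¹ • (x - y)) '' projSet F x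

variable {F : Set (En n)} {x : En n}

theorem norm_eq_one_of_mem_unitNormals (hx : 0 < infDist x F) {ν : En n}
    (hν : ν ∈ unitNormals F x) : ‖ν‖ = 1 := by
  obtain ⟨y, ⟨-, hy⟩, rfl⟩ := hν
  rw [norm_smul, norm_inv, Real.norm_of_nonneg hx.le, ← dist_eq_norm, hy,
    inv_mul_cancel₀ hx.ne']

theorem isCompact_unitNormals (hF : IsCompact F) : IsCompact (unitNormals F x) :=
  (hF.inter_right (isClosed_eq (by fun_prop) continuous_const)).image (by fun_prop)

theorem mem_superDiff_of_mem_unitNormals (hx : 0 < infDist x F) {ν : En n}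
    (hν : ν ∈ unitNormals F x) : ν ∈ superDiff (fun z => infDist z F) x := by
  obtain ⟨y, ⟨hyF, hy⟩, rfl⟩ := hν
  set d := infDist x F
  have hxy : ‖x - y‖ = d := by rw [← dist_eq_norm, hy]
  intro ε hε
  filter_upwards [ball_mem_nhds x (by positivity : 0 < 2 * ε * d)] with z hz
  rw [mem_ball, dist_eq_norm] at hz
  -- `infDist · F ≤ ‖· - y‖` with equality at `x`, and `‖· - y‖` has a quadratic upper expansion
  have hexp : d * ‖z - y‖ * 2 ≤ d * d * 2 + 2 * ⟪x - y, z - x⟫_ℝ + ‖z - x‖ ^ 2 := by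
    have hsq := norm_add_sq_real (x - y) (z - x)
    rw [sub_add_sub_cancel', hxy] at hsq
    nlinarith [sq_nonneg (‖z - y‖ - d)]
  have hle : infDist z F ≤ ‖z - y‖ := dist_eq_norm z y ▸ infDist_le_dist_of_mem hyF
  rw [real_inner_smul_left, ← mul_le_mul_iff_of_pos_left (by positivity : 0 < 2 * d)]
  field_simp
  nlinarith [norm_nonneg (z - x)]

theorem eventually_add_mul_lt_infDist (hF : IsCompact F) (hx : 0 < infDist x F) {v : En n}
    {c : ℝ} (hc : ∀ ν ∈ unitNormals F x, c < ⟪ν, v⟫_ℝ) :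
    ∀ᶠ t in 𝓝[>] (0 : ℝ), infDist x F + t * c < infDist (x + t • v) F := by
  set d := infDist x F
  have hFne : F.Nonempty := nonempty_iff_ne_empty.2 fun h => by simp [d, h] at hx
  -- by compactness, `c ‖x - y‖ < ⟪x - y, v⟫` persists at all `y ∈ F` with `dist x y < d'`,
  -- and for small `t` the nearest points of `x + t • v` are among them
  obtain ⟨d', hd', hnear⟩ : ∃ d' > d, ∀ y ∈ F ∩ {y | 0 ≤ c * ‖x - y‖ - ⟪x - y, v⟫_ℝ},
      d' ≤ dist x y := by
    refine (hF.inter_right (isClosed_le continuous_const (by fun_prop))).exists_forall_le'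
      (by fun_prop) fun y ⟨hyF, (hyc : 0 ≤ c * ‖x - y‖ - ⟪x - y, v⟫_ℝ)⟩ =>
        (infDist_le_dist_of_mem hyF).lt_of_ne fun hyd => ?_
    have hν := hc _ ⟨y, ⟨hyF, hyd.symm⟩, rfl⟩
    rw [real_inner_smul_left, lt_inv_mul_iff₀ hx] at hν
    rw [← dist_eq_norm, ← hyd] at hyc
    linarith
  filter_upwards [Ioo_mem_nhdsGT (by positivity : 0 < (d' - d) / (2 * ‖v‖ + 1))]
    with t ⟨ht0, htd⟩
  obtain ⟨y, hyF, hyd⟩ := hF.exists_infDist_eq_dist hFne (x + t • v)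
  have hdist : dist x y < d' := by
    have hxt : dist x (x + t • v) = t * ‖v‖ := by
      rw [dist_comm, dist_eq_norm, add_sub_cancel_left, norm_smul, Real.norm_of_nonneg ht0.le]
    have h1 := dist_triangle x (x + t • v) y
    have h2 : infDist (x + t • v) F ≤ d + dist (x + t • v) x := infDist_le_infDist_add_dist
    rw [lt_div_iff₀ (by positivity)] at htd
    rw [dist_comm] at h2
    nlinarith [norm_nonneg v]
  have hyc : c * ‖x - y‖ < ⟪x - y, v⟫_ℝ := by
    by_contra! h
    exact (hnear y ⟨hyF, sub_nonneg.2 h⟩).not_gt hdist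
  have hdy : d ≤ ‖x - y‖ := dist_eq_norm x y ▸ infDist_le_dist_of_mem hyF
  have hcs : ⟪x - y, x - y + t • v⟫_ℝ ≤ ‖x - y‖ * infDist (x + t • v) F := by
    rw [hyd, dist_eq_norm, show x + t • v - y = x - y + t • v by abel]
    exact real_inner_le_norm _ _
  rw [inner_add_right, real_inner_self_eq_norm_sq, real_inner_smul_right] at hcs
  have : ‖x - y‖ * (‖x - y‖ + t * c) < ‖x - y‖ * infDist (x + t • v) F := by nlinarith
  nlinarith [lt_of_mul_lt_mul_left this (norm_nonneg _)]

theorem superDiff_infDist_subset_convexHull (hF : IsCompact F) (hx : 0 < infDist x F) :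
    superDiff (fun z => infDist z F) x ⊆ convexHull ℝ (unitNormals F x) := by
  intro p hp
  by_contra hpN
  obtain ⟨f, c, hfp, hfN⟩ := geometric_hahn_banach_point_closed (convex_convexHull ℝ _)
    (isCompact_unitNormals hF).convexHull.isClosed hpN
  set v := (InnerProductSpace.toDual ℝ (En n)).symm f
  have hv : ∀ q, ⟪q, v⟫_ℝ = f q := fun q => by
    rw [real_inner_comm]; exact InnerProductSpace.toDual_symm_apply
  have hlow := eventually_add_mul_lt_infDist hF hx (v := v) fun ν hν =>
    hv ν ▸ hfN ν (subset_convexHull ℝ _ hν)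
  have hup := eventually_le_add_mul_of_mem_superDiff hp v (ε := c - ⟪p, v⟫_ℝ)
    (by linarith [hv p])
  obtain ⟨t, hlt, hle⟩ := (hlow.and hup).exists
  simp only [add_sub_cancel] at hle
  exact hlt.not_ge hle

end UnitNormals

theorem dBd_pos_of_mem_singSet {n : ℕ} {Ω : Set (En n)} (hop : IsOpen Ω) {x₀ : En n}
    (hx₀ : x₀ ∈ SingSet Ω) : 0 < dBd Ω x₀ := by
  have hFne : (frontier Ω).Nonempty := nonempty_iff_ne_empty.2 fun h => hx₀.2 <| by
    have hzero : dBd Ω = fun _ => 0 := funext fun x => by simp [dBd, h]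
    exact hzero ▸ differentiableAt_const 0
  exact (isClosed_frontier.notMem_iff_infDist_pos hFne).1 fun h =>
    (Set.eq_empty_iff_forall_notMem.1 hop.inter_frontier_eq x₀) ⟨hx₀.1, h⟩

/-- Estimate of the distance function near a singular point, convex case. -/
theorem distance_estimate_at_singular_point_convex {n : ℕ} (Ω : Set (En n))
    (hop : IsOpen Ω) (hbd : Bornology.IsBounded Ω) (hconv : Convex ℝ Ω)
    (x₀ : En n) (hx₀ : x₀ ∈ SingSet Ω)
    (p : En n) (hp : p ∈ superDiff (dBd Ω) x₀) (hp1 : ‖p‖ < 1) :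
    ∃ K > (0 : ℝ), ∃ ζ : En n, ‖ζ‖ = 1 ∧
      ∀ x ∈ Ω, dBd Ω x ≤ dBd Ω x₀ + ⟪p, x - x₀⟫_ℝ - K * |⟪ζ, x - x₀⟫_ℝ| := by
  have hF : IsCompact (frontier Ω) :=
    hbd.isCompact_closure.of_isClosed_subset isClosed_frontier frontier_subset_closure
  have hd₀ := dBd_pos_of_mem_singSet hop hx₀
  set N := unitNormals (frontier Ω) x₀
  have hNG : convexHull ℝ N ⊆ {q | ∀ x ∈ Ω, dBd Ω x ≤ dBd Ω x₀ + ⟪q, x - x₀⟫_ℝ} :=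
    convexHull_min (fun ν hν x hx =>
      (concaveOn_infDist_frontier hop hconv).le_add_inner_of_mem_superDiff hx₀.1
        (mem_superDiff_of_mem_unitNormals hd₀ hν) hx)
      (convex_setOf_forall_le_add_inner _ _ _)
  have hpN : p ∈ convexHull ℝ N := superDiff_infDist_subset_convexHull hF hd₀ hp
  have hpext : p ∉ (convexHull ℝ N).extremePoints ℝ := fun h =>
    hp1.ne (norm_eq_one_of_mem_unitNormals hd₀ (extremePoints_convexHull_subset h))
  obtain ⟨u, hu, hpu, hmu⟩ :=
    (convex_convexHull ℝ N).exists_add_sub_mem_of_notMem_extremePoints hpN hpext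
  refine ⟨‖u‖, norm_pos_iff.2 hu, ‖u‖⁻¹ • u, by simp [norm_smul, hu], fun x hx => ?_⟩
  have hplus := hNG hpu x hx
  have hminus := hNG hmu x hx
  rw [inner_add_left] at hplus
  rw [inner_sub_left] at hminus
  rw [real_inner_smul_left, abs_mul, abs_inv, abs_norm, ← mul_assoc,
    mul_inv_cancel₀ (norm_ne_zero_iff.2 hu), one_mul]
  cases abs_cases ⟪u, x - x₀⟫_ℝ <;> linarith
end

section
/- Let S ⊂ ℝⁿ be a nonempty closed set and let x ∉ S. Then the distance function d_S is differentiable at x if and only if the projection set π_S(x) is a singleton; in that case, writing π_S(x) = {y}, one has ∇d_S(x) = (x − y)/d_S(x). -/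
open scoped InnerProductSpace
open Metric Set Filter

/-!
Let `y ∈ S` be a nearest point of `x ∉ S`. Since `d_S ≤ |· - y|` with equality at `x`, the
function `|· - y| - d_S` has a minimum at `x`; so if `d_S` is differentiable there, its gradient
is the gradient `(x - y)/|x - y|` of `|· - y|`, and this determines `y`. Conversely, if `y` is
the only nearest point of `x`, then by compactness the nearest points `w` of points `z` near `x`
lie near `y`, and the subgradient inequality for the norm at `x - w` bounds
`d_S(z) = |z - w|` from below by `d_S(x) + ⟪(x - w)/|x - w|, z - x⟫`. This matches the upper
bound `|z - y|` to first order.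
-/

open Topology InnerProductSpace

theorem hasFDerivAt_of_le_of_eventually_ge {E : Type*} [NormedAddCommGroup E] [NormedSpace ℝ E]
    {f g : E → ℝ} {L : E →L[ℝ] ℝ} {x : E} (hg : HasFDerivAt g L x)
    (hfg : ∀ᶠ z in 𝓝 x, f z ≤ g z) (hfgx : f x = g x)
    (hlow : ∀ c > 0, ∀ᶠ z in 𝓝 x, f x + L (z - x) - c * ‖z - x‖ ≤ f z) :
    HasFDerivAt f L x := by
  rw [hasFDerivAt_iff_isLittleO, Asymptotics.isLittleO_iff] at hg ⊢
  intro c hc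
  filter_upwards [hg hc, hfg, hlow c hc] with z hgz hfgz hlowz
  rw [Real.norm_eq_abs] at hgz ⊢
  rw [abs_le]
  constructor <;> linarith [le_abs_self (g z - g x - L (z - x))]

theorem IsClosed.eventually_forall_nearest_dist_lt {X : Type*} [PseudoMetricSpace X]
    [ProperSpace X] {S : Set X} (hS : IsClosed S) {x y : X}
    (huniq : ∀ w ∈ S, dist x w = infDist x S → w = y) {ε : ℝ} (hε : 0 < ε) :
    ∀ᶠ z in 𝓝 x, ∀ w ∈ S, dist z w = infDist z S → dist w y < ε := by
  rcases (S \ ball y ε).eq_empty_or_nonempty with hT | hT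
  · exact Eventually.of_forall fun z w hw _ => sdiff_eq_empty.mp hT hw
  have hgap : infDist x S < infDist x (S \ ball y ε) := by
    obtain ⟨w, hwT, hw⟩ := (hS.sdiff isOpen_ball).exists_infDist_eq_dist hT x
    refine (infDist_le_infDist_of_subset sdiff_subset hT).lt_of_ne fun h => hwT.2 ?_
    rw [huniq w hwT.1 (by rw [← hw, h])]
    exact mem_ball_self hε
  filter_upwards [(continuous_infDist_pt S).continuousAt.eventually_lt
    (continuous_infDist_pt _).continuousAt hgap] with z hz w hwS hw
  by_contra hwy
  have hwT : w ∈ S \ ball y ε := ⟨hwS, by rwa [mem_ball]⟩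
  exact (infDist_le_dist_of_mem hwT).not_gt (hw ▸ hz)

section InnerProductSpace

variable {E : Type*} [NormedAddCommGroup E] [InnerProductSpace ℝ E]

theorem norm_add_inner_le_norm_add (a v : E) : ‖a‖ + ⟪‖a‖⁻¹ • a, v⟫_ℝ ≤ ‖a + v‖ := by
  rcases eq_or_ne a 0 with rfl | ha
  · simp
  have hpos : 0 < ‖a‖ := norm_pos_iff.mpr ha
  rw [real_inner_smul_left, ← mul_le_mul_iff_right₀ hpos]
  calc ‖a‖ * (‖a‖ + ‖a‖⁻¹ * ⟪a, v⟫_ℝ) = ⟪a, a + v⟫_ℝ := by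
        rw [inner_add_right, real_inner_self_eq_norm_sq]
        field_simp
    _ ≤ ‖a‖ * ‖a + v‖ := real_inner_le_norm a (a + v)

theorem hasGradientAt_dist_left [CompleteSpace E] {x y : E} (hxy : x ≠ y) :
    HasGradientAt (fun z => dist z y) ((dist x y)⁻¹ • (x - y)) x := by
  have hsq : HasFDerivAt (fun z : E => ‖z - y‖ ^ 2) (2 • innerSL ℝ (x - y)) x := by
    simpa using ((hasFDerivAt_id x).sub_const y).norm_sq
  have hsqrt := hsq.sqrt (by positivity [sub_ne_zero.mpr hxy])
  simp only [← dist_eq_norm, Real.sqrt_sq dist_nonneg] at hsqrt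
  rw [hasGradientAt_iff_hasFDerivAt]
  refine hsqrt.congr_fderiv ?_
  ext v
  simp only [smul_apply, innerSL_apply_apply, toDual_apply_apply, real_inner_smul_left,
    smul_eq_mul, two_smul, add_apply]
  field_simp
  ring

theorem IsClosed.eventually_infDist_ge [ProperSpace E] {S : Set E} (hS : IsClosed S) {x y : E}
    (hx : x ∉ S) (hy : y ∈ S) (huniq : ∀ w ∈ S, dist x w = infDist x S → w = y) {c : ℝ}
    (hc : 0 < c) :
    ∀ᶠ z in 𝓝 x, infDist x S + ⟪(dist x y)⁻¹ • (x - y), z - x⟫_ℝ - c * ‖z - x‖ ≤ infDist z S := by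
  set u : E → E := fun w => ‖x - w‖⁻¹ • (x - w)
  have hu : ContinuousAt u y := by
    have hsub : ContinuousAt (fun w : E => x - w) y := by fun_prop
    exact (hsub.norm.inv₀ (by simpa [sub_eq_zero] using (ne_of_mem_of_not_mem hy hx).symm)).smul
      hsub
  obtain ⟨ε, hε, hclose⟩ := Metric.continuousAt_iff.mp hu c hc
  filter_upwards [hS.eventually_forall_nearest_dist_lt huniq hε] with z hz
  obtain ⟨w, hwS, hw⟩ := hS.exists_infDist_eq_dist ⟨y, hy⟩ z
  have hinner : ⟪u y, z - x⟫_ℝ - c * ‖z - x‖ ≤ ⟪u w, z - x⟫_ℝ := by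
    have hwy : ‖u w - u y‖ < c := by simpa [dist_eq_norm] using hclose (hz w hwS hw.symm)
    have := neg_le_of_abs_le ((abs_real_inner_le_norm (u w - u y) (z - x)).trans
      (mul_le_mul_of_nonneg_right hwy.le (norm_nonneg _)))
    rw [inner_sub_left] at this
    linarith
  calc infDist x S + ⟪(dist x y)⁻¹ • (x - y), z - x⟫_ℝ - c * ‖z - x‖
      ≤ ‖x - w‖ + ⟪u w, z - x⟫_ℝ := by
        have hxw : infDist x S ≤ ‖x - w‖ := dist_eq_norm x w ▸ infDist_le_dist_of_mem hwS
        simp only [u, dist_eq_norm] at hinner ⊢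
        linarith
    _ ≤ ‖(x - w) + (z - x)‖ := norm_add_inner_le_norm_add _ _
    _ = infDist z S := by rw [hw, dist_eq_norm, sub_add_sub_cancel']

theorem IsClosed.hasGradientAt_infDist [ProperSpace E] {S : Set E} (hS : IsClosed S) {x y : E}
    (hx : x ∉ S) (hy : y ∈ S) (hxy : dist x y = infDist x S)
    (huniq : ∀ w ∈ S, dist x w = infDist x S → w = y) :
    HasGradientAt (infDist · S) ((infDist x S)⁻¹ • (x - y)) x := by
  rw [← hxy]
  exact hasFDerivAt_of_le_of_eventually_ge
    (hasGradientAt_dist_left (ne_of_mem_of_not_mem hy hx).symm)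
    (Eventually.of_forall fun z => infDist_le_dist_of_mem hy) hxy.symm
    fun c hc => hS.eventually_infDist_ge hx hy huniq hc

theorem HasGradientAt.eq_of_infDist_eq_dist [CompleteSpace E] {S : Set E} {x y p : E}
    (h : HasGradientAt (infDist · S) p x) (hx : x ∉ S) (hy : y ∈ S)
    (hxy : dist x y = infDist x S) :
    p = (infDist x S)⁻¹ • (x - y) := by
  have hmin : IsLocalMin (fun z => dist z y - infDist z S) x :=
    Eventually.of_forall fun z => by
      simp only [hxy, sub_self, sub_nonneg]
      exact infDist_le_dist_of_mem hy
  have hzero := hmin.hasFDerivAt_eq_zero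
    ((hasGradientAt_dist_left (ne_of_mem_of_not_mem hy hx).symm).hasFDerivAt.sub h.hasFDerivAt)
  rw [← map_sub, map_eq_zero_iff _ (toDual ℝ E).injective, sub_eq_zero, hxy] at hzero
  exact hzero.symm

theorem eq_of_infDist_eq_dist_of_differentiableAt [CompleteSpace E] {S : Set E} {x y₁ y₂ : E}
    (hd : DifferentiableAt ℝ (infDist · S) x) (hx : x ∉ S) (hy₁ : y₁ ∈ S)
    (hxy₁ : dist x y₁ = infDist x S) (hy₂ : y₂ ∈ S) (hxy₂ : dist x y₂ = infDist x S) :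
    y₁ = y₂ := by
  have hpos : infDist x S ≠ 0 := hxy₁ ▸ dist_ne_zero.mpr (ne_of_mem_of_not_mem hy₁ hx).symm
  have h := (hd.hasGradientAt.eq_of_infDist_eq_dist hx hy₁ hxy₁).symm.trans
    (hd.hasGradientAt.eq_of_infDist_eq_dist hx hy₂ hxy₂)
  exact sub_right_injective (smul_right_injective E (inv_ne_zero hpos) h)

end InnerProductSpace

/-- For a nonempty closed set `S` and `x ∉ S`, the distance function `d_S`
is differentiable at `x` iff the projection set is a singleton, and in that case
`∇d_S(x) = (x - y)/d_S(x)`. -/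
theorem distance_differentiable_iff_unique_projection {n : ℕ} (S : Set (En n))
    (hS : S.Nonempty) (hSc : IsClosed S) (x : En n) (hx : x ∉ S) :
    (DifferentiableAt ℝ (fun z => Metric.infDist z S) x ↔ ∃ y, projSet S x = {y}) ∧
      ∀ y : En n, projSet S x = {y} →
        gradient (fun z => Metric.infDist z S) x = (Metric.infDist x S)⁻¹ • (x - y) := by
  have hgrad : ∀ {y}, projSet S x = {y} →
      HasGradientAt (infDist · S) ((infDist x S)⁻¹ • (x - y)) x := by
    intro y hy
    obtain ⟨⟨hyS, hxy⟩, huniq⟩ := eq_singleton_iff_unique_mem.mp hy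
    exact hSc.hasGradientAt_infDist hx hyS hxy fun w hwS hxw => huniq w ⟨hwS, hxw⟩
  refine ⟨⟨fun hd => ?_, fun ⟨y, hy⟩ => (hgrad hy).differentiableAt⟩,
    fun y hy => (hgrad hy).gradient⟩
  obtain ⟨y, hyS, hxy⟩ := hSc.exists_infDist_eq_dist hS x
  exact ⟨y, eq_singleton_iff_unique_mem.mpr ⟨⟨hyS, hxy.symm⟩, fun w ⟨hwS, hxw⟩ =>
    eq_of_infDist_eq_dist_of_differentiableAt hd hx hwS hxw hyS hxy.symm⟩⟩
end

section
/- Let ρ > 0, let f : [0,ρ] → ℝ be continuous, and for z in the open ball B_ρ(0) ⊂ ℝⁿ set v(z) := f(ρ − |z|). Fix z₀ ∈ B_ρ(0) with z₀ ≠ 0, and let ψ be a C¹ function that touches v from above at z₀ (i.e., ψ(z₀) = v(z₀) and ψ ≥ v in a neighborhood of z₀). Then the superdifferential D⁺f(ρ − |z₀|) is nonempty and ∇ψ(z₀) = α·z₀/|z₀| for some α with −α ∈ D⁺f(ρ − |z₀|). -/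
open scoped InnerProductSpace
open Metric Set Filter

/-- Fréchet superdifferential of `f : [0,ρ] → ℝ` at `t`. -/
def superDiff1 (f : ℝ → ℝ) (ρ t : ℝ) : Set ℝ :=
  {q | ∀ ε > (0 : ℝ), ∀ᶠ s in nhdsWithin t (Set.Icc 0 ρ),
    f s - f t - q * (s - t) ≤ ε * |s - t|}

/-! On the sphere `‖z‖ = ‖z₀‖` the function `v` is constant, so `ψ` has a local minimum on that
sphere at `z₀`; by Lagrange multipliers `∇ψ(z₀)` is normal to the sphere, i.e. parallel to `z₀`.
Along the ray `s ↦ (ρ - s) • z₀ / ‖z₀‖` the function `v` reads `f (s)`, so `ψ` restricted to the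
ray touches `f` from above at `ρ - ‖z₀‖`, and its derivative there is a superdifferential of `f`. -/

theorem mem_superDiff1_of_hasDerivWithinAt_of_le {f g : ℝ → ℝ} {ρ t q : ℝ}
    (hg : HasDerivWithinAt g q (Icc 0 ρ) t) (heq : g t = f t)
    (hle : ∀ᶠ s in nhdsWithin t (Icc 0 ρ), f s ≤ g s) : q ∈ superDiff1 f ρ t := by
  intro ε hε
  filter_upwards [hasDerivWithinAt_iff_isLittleO.mp hg |>.def hε, hle] with s hs hfg
  rw [Real.norm_eq_abs, Real.norm_eq_abs, smul_eq_mul] at hs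
  linarith [le_abs_self (g s - g t - (s - t) * q)]

theorem exists_gradient_eq_smul_of_isLocalMinOn_sphere {E : Type*} [NormedAddCommGroup E]
    [InnerProductSpace ℝ E] [CompleteSpace E] {ψ : E → ℝ} {x : E} (hx : x ≠ 0)
    (hψ : ContDiffAt ℝ 1 ψ x) (hmin : IsLocalMinOn ψ (sphere 0 ‖x‖) x) :
    ∃ c : ℝ, gradient ψ x = c • x := by
  have hsphere : {y : E | ‖y‖ ^ 2 = ‖x‖ ^ 2} = sphere 0 ‖x‖ := by
    ext y
    simp
  rw [← hsphere] at hmin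
  obtain ⟨a, b, hab, hlin⟩ := IsLocalExtrOn.exists_multipliers_of_hasStrictFDerivAt_1d
    (IsMinFilter.isExtr hmin) (hasStrictFDerivAt_norm_sq x) (hψ.hasStrictFDerivAt one_ne_zero)
  have hvec : (2 * a) • x + b • gradient ψ x = 0 := by
    set v := (2 * a) • x + b • gradient ψ x
    have hv := congrArg (· v) hlin
    simp only [add_apply, smul_apply, innerSL_apply_apply, zero_apply, smul_eq_mul,
      nsmul_eq_mul, Nat.cast_ofNat] at hv
    rw [← InnerProductSpace.toDual_symm_apply] at hv
    rw [← inner_self_eq_zero (𝕜 := ℝ)]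
    calc ⟪v, v⟫_ℝ = a * (2 * ⟪x, v⟫_ℝ) + b * ⟪gradient ψ x, v⟫_ℝ := by
          simp only [v, inner_add_left, real_inner_smul_left]; ring
      _ = 0 := hv
  have hb : b ≠ 0 := by
    rintro rfl
    have ha : a = 0 := by simpa [hx] using hvec
    exact hab (by simp [ha])
  refine ⟨-(2 * a / b), ?_⟩
  calc gradient ψ x = b⁻¹ • (b • gradient ψ x) := (inv_smul_smul₀ hb _).symm
    _ = b⁻¹ • -((2 * a) • x) := by rw [eq_neg_of_add_eq_zero_right hvec]
    _ = -(2 * a / b) • x := by rw [smul_neg, smul_smul, ← neg_smul, inv_mul_eq_div]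

theorem HasGradientAt.comp_hasDerivAt {E : Type*} [NormedAddCommGroup E] [InnerProductSpace ℝ E]
    [CompleteSpace E] {ψ : E → ℝ} {g : E} {c : ℝ → E} {c' : E} {t : ℝ}
    (hψ : HasGradientAt ψ g (c t)) (hc : HasDerivAt c c' t) :
    HasDerivAt (ψ ∘ c) ⟪g, c'⟫_ℝ t := by
  simpa using (hasGradientAt_iff_hasFDerivAt.mp hψ).comp_hasDerivAt t hc

theorem neg_inner_gradient_mem_superDiff1 {E : Type*} [NormedAddCommGroup E]
    [InnerProductSpace ℝ E] [CompleteSpace E] {ρ : ℝ} {f : ℝ → ℝ} {ψ : E → ℝ} {z₀ : E}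
    (hz₀ : z₀ ≠ 0) (hψ : DifferentiableAt ℝ ψ z₀) (htouch₀ : ψ z₀ = f (ρ - ‖z₀‖))
    (htouch : ∀ᶠ z in nhds z₀, f (ρ - ‖z‖) ≤ ψ z) :
    -⟪gradient ψ z₀, ‖z₀‖⁻¹ • z₀⟫_ℝ ∈ superDiff1 f ρ (ρ - ‖z₀‖) := by
  set u := ‖z₀‖⁻¹ • z₀
  have hu : ‖u‖ = 1 := by simp [u, norm_smul, hz₀]
  set γ : ℝ → E := fun s => (ρ - s) • u
  have hγ : γ (ρ - ‖z₀‖) = z₀ := by simp [γ, u, smul_smul, hz₀]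
  have hγ' : HasDerivAt γ (-u) (ρ - ‖z₀‖) := by
    simpa using ((hasDerivAt_id _).const_sub ρ).smul_const u
  have hψγ : HasGradientAt ψ (gradient ψ z₀) (γ (ρ - ‖z₀‖)) := by
    rw [hγ]
    exact hψ.hasGradientAt
  have hγz₀ : Tendsto γ (nhds (ρ - ‖z₀‖)) (nhds z₀) := by
    simpa only [hγ] using hγ'.continuousAt.tendsto
  refine mem_superDiff1_of_hasDerivWithinAt_of_le (g := ψ ∘ γ)
    (by simpa only [inner_neg_right] using (hψγ.comp_hasDerivAt hγ').hasDerivWithinAt)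
    (by rw [Function.comp_apply, hγ, htouch₀]) ?_
  filter_upwards [nhdsWithin_le_nhds (hγz₀.eventually htouch), self_mem_nhdsWithin]
    with s hs hsI
  have hγs : ‖γ s‖ = ρ - s := by simp [γ, norm_smul, hu, hsI.2]
  rwa [hγs, sub_sub_cancel] at hs

theorem touching_from_above_radial_general {n : ℕ} (ρ : ℝ) (f : ℝ → ℝ) (z₀ : En n)
    (hz₀0 : z₀ ≠ 0) (ψ : En n → ℝ) (hψ : ContDiff ℝ 1 ψ)
    (htouch₀ : ψ z₀ = f (ρ - ‖z₀‖))
    (htouch : ∀ᶠ z in nhds z₀, f (ρ - ‖z‖) ≤ ψ z) :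
    (superDiff1 f ρ (ρ - ‖z₀‖)).Nonempty ∧
      ∃ α : ℝ, -α ∈ superDiff1 f ρ (ρ - ‖z₀‖) ∧
        gradient ψ z₀ = α • (‖z₀‖⁻¹ • z₀) := by
  have hmin : IsLocalMinOn ψ (sphere 0 ‖z₀‖) z₀ := by
    filter_upwards [nhdsWithin_le_nhds htouch, self_mem_nhdsWithin] with z hz hzs
    rwa [mem_sphere_zero_iff_norm.mp hzs, ← htouch₀] at hz
  obtain ⟨c, hc⟩ := exists_gradient_eq_smul_of_isLocalMinOn_sphere hz₀0 hψ.contDiffAt hmin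
  have hgrad : gradient ψ z₀ = (c * ‖z₀‖) • (‖z₀‖⁻¹ • z₀) := by
    simp [hc, smul_smul, hz₀0]
  have hsuper := neg_inner_gradient_mem_superDiff1 hz₀0 (hψ.differentiable one_ne_zero z₀)
    htouch₀ htouch
  rw [hgrad, real_inner_smul_left, real_inner_self_eq_norm_sq, norm_smul, norm_inv, norm_norm,
    inv_mul_cancel₀ (norm_ne_zero_iff.mpr hz₀0), one_pow, mul_one] at hsuper
  exact ⟨⟨_, hsuper⟩, _, hsuper, hgrad⟩

/-- If a `C¹` function `ψ` touches `v(z) = f(ρ - |z|)` from above at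
`z₀ ≠ 0`, then `D⁺f(ρ - |z₀|) ≠ ∅` and `∇ψ(z₀) = α z₀/|z₀|` with `-α ∈ D⁺f(ρ - |z₀|)`. -/
theorem touching_from_above_radial {n : ℕ} (ρ : ℝ) (hρ : 0 < ρ) (f : ℝ → ℝ)
    (hf : ContinuousOn f (Set.Icc 0 ρ)) (z₀ : En n) (hz₀ : z₀ ∈ Metric.ball (0 : En n) ρ)
    (hz₀0 : z₀ ≠ 0) (ψ : En n → ℝ) (hψ : ContDiff ℝ 1 ψ)
    (htouch₀ : ψ z₀ = f (ρ - ‖z₀‖))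
    (htouch : ∀ᶠ z in nhds z₀, f (ρ - ‖z‖) ≤ ψ z) :
    (superDiff1 f ρ (ρ - ‖z₀‖)).Nonempty ∧
      ∃ α : ℝ, -α ∈ superDiff1 f ρ (ρ - ‖z₀‖) ∧
        gradient ψ z₀ = α • (‖z₀‖⁻¹ • z₀) :=
  touching_from_above_radial_general ρ f z₀ hz₀0 ψ hψ htouch₀ htouch
end

section
/- Let ρ > 0, let f : [0,ρ] → ℝ be continuous, and for z in the open ball B_ρ(0) ⊂ ℝⁿ set v(z) := f(ρ − |z|). Fix z₀ ∈ B_ρ(0) with z₀ ≠ 0, and let ψ be a C¹ function that touches v from below at z₀ (i.e., ψ(z₀) = v(z₀) and ψ ≤ v in a neighborhood of z₀). Then the subdifferential D⁻f(ρ − |z₀|) is nonempty and ∇ψ(z₀) = α·z₀/|z₀| for some α with −α ∈ D⁻f(ρ − |z₀|). -/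
open scoped InnerProductSpace
open Metric Set Filter

/-- Fréchet subdifferential of `f : [0,ρ] → ℝ` at `t`. -/
def subDiff1 (f : ℝ → ℝ) (ρ t : ℝ) : Set ℝ :=
  {q | ∀ ε > (0 : ℝ), ∀ᶠ s in nhdsWithin t (Set.Icc 0 ρ),
    -(ε * |s - t|) ≤ f s - f t - q * (s - t)}

/-! On the sphere `‖z‖ = ‖z₀‖` the function `v` is constant, so `ψ` has a local maximum on it at
`z₀` and, by the Lagrange multiplier rule, `∇ψ(z₀)` is a multiple of `z₀`. Along the ray
`s ↦ (ρ - s) • z₀ / ‖z₀‖` the function `v` reads `f s`, so `ψ` restricted to this ray touches `f`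
from below at `ρ - ‖z₀‖`, and its derivative there, `-α`, is a subgradient of `f`. -/

open scoped Topology

theorem mem_subDiff1_of_hasDerivWithinAt_of_le {f h : ℝ → ℝ} {ρ t h' : ℝ}
    (hd : HasDerivWithinAt h h' (Icc 0 ρ) t) (hle : ∀ᶠ s in 𝓝[Icc 0 ρ] t, h s ≤ f s)
    (heq : h t = f t) : h' ∈ subDiff1 f ρ t := by
  intro ε hε
  filter_upwards [hd.isLittleO.def hε, hle] with s hs hs_le
  rw [Real.norm_eq_abs, Real.norm_eq_abs, smul_eq_mul] at hs
  have := neg_abs_le (h s - h t - (s - t) * h')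
  linarith

section InnerProductSpace

variable {E : Type*} [NormedAddCommGroup E] [InnerProductSpace ℝ E] [CompleteSpace E]

theorem neg_inner_mem_subDiff1_of_le_comp_sub_norm {f : ℝ → ℝ} {ρ : ℝ} {ψ : E → ℝ} {g z₀ : E}
    (hz₀ : z₀ ≠ 0) (hψ : HasGradientAt ψ g z₀) (htouch₀ : ψ z₀ = f (ρ - ‖z₀‖))
    (htouch : ∀ᶠ z in 𝓝 z₀, ψ z ≤ f (ρ - ‖z‖)) :
    -⟪g, ‖z₀‖⁻¹ • z₀⟫_ℝ ∈ subDiff1 f ρ (ρ - ‖z₀‖) := by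
  set u := ‖z₀‖⁻¹ • z₀
  set γ : ℝ → E := fun s => (ρ - s) • u
  have hγ₀ : γ (ρ - ‖z₀‖) = z₀ := by simp [γ, u, smul_smul, hz₀]
  have hγ' : HasDerivAt γ (-u) (ρ - ‖z₀‖) := by
    simpa using ((hasDerivAt_id _).const_sub ρ).smul_const u
  refine mem_subDiff1_of_hasDerivWithinAt_of_le (h := ψ ∘ γ) ?_ ?_ (by simp [hγ₀, htouch₀])
  · rw [← hγ₀] at hψ
    simpa using (hψ.hasFDerivAt.comp_hasDerivAt _ hγ').hasDerivWithinAt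
  · have hγ_tendsto : Tendsto γ (𝓝[Icc 0 ρ] (ρ - ‖z₀‖)) (𝓝 z₀) := by
      have := (by fun_prop : Continuous γ).continuousWithinAt (s := Icc 0 ρ) (x := ρ - ‖z₀‖)
      rwa [ContinuousWithinAt, hγ₀] at this
    filter_upwards [hγ_tendsto.eventually htouch, self_mem_nhdsWithin] with s hs hs_mem
    have hγ_norm : ‖γ s‖ = ρ - s := by
      simp [γ, u, norm_smul, hz₀, abs_of_nonneg (sub_nonneg.2 hs_mem.2)]
    simpa [hγ_norm] using hs

theorem exists_eq_smul_of_isLocalExtrOn_sphere {ψ : E → ℝ} {g x : E} (hx : x ≠ 0)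
    (hextr : IsLocalExtrOn ψ (sphere 0 ‖x‖) x)
    (hψ : HasStrictFDerivAt ψ (InnerProductSpace.toDual ℝ E g) x) : ∃ c : ℝ, g = c • x := by
  have hsphere : sphere (0 : E) ‖x‖ = {y | ‖y‖ ^ 2 = ‖x‖ ^ 2} := by
    ext y
    simp
  rw [hsphere] at hextr
  obtain ⟨a, b, hab, hlin⟩ :=
    hextr.exists_multipliers_of_hasStrictFDerivAt_1d (hasStrictFDerivAt_norm_sq x) hψ
  have hlin_apply (y : E) : a * (2 * ⟪x, y⟫_ℝ) + b * ⟪g, y⟫_ℝ = 0 := by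
    simpa using congrArg (fun L : StrongDual ℝ E => L y) hlin
  have hb : b ≠ 0 := by
    rintro rfl
    have ha : a ≠ 0 := by simpa using hab
    simpa [ha, hx] using hlin_apply x
  refine ⟨-(2 * a / b), ext_inner_right ℝ fun y => ?_⟩
  rw [real_inner_smul_left]
  field_simp
  linarith [hlin_apply y]

end InnerProductSpace

theorem touching_from_below_radial_general {n : ℕ} (ρ : ℝ) (f : ℝ → ℝ) (z₀ : En n)
    (hz₀0 : z₀ ≠ 0) (ψ : En n → ℝ) (hψ : ContDiff ℝ 1 ψ)
    (htouch₀ : ψ z₀ = f (ρ - ‖z₀‖))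
    (htouch : ∀ᶠ z in nhds z₀, ψ z ≤ f (ρ - ‖z‖)) :
    (subDiff1 f ρ (ρ - ‖z₀‖)).Nonempty ∧
      ∃ α : ℝ, -α ∈ subDiff1 f ρ (ρ - ‖z₀‖) ∧
        gradient ψ z₀ = α • (‖z₀‖⁻¹ • z₀) := by
  have hstrict : HasStrictFDerivAt ψ (InnerProductSpace.toDual ℝ _ (gradient ψ z₀)) z₀ := by
    rw [toDual_gradient]
    exact hψ.contDiffAt.hasStrictFDerivAt one_ne_zero
  have hmax_sphere : IsLocalMaxOn ψ (sphere 0 ‖z₀‖) z₀ := by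
    filter_upwards [nhdsWithin_le_nhds htouch, self_mem_nhdsWithin] with z hz hz_sphere
    rwa [mem_sphere_zero_iff_norm.1 hz_sphere, ← htouch₀] at hz
  obtain ⟨c, hc⟩ :=
    exists_eq_smul_of_isLocalExtrOn_sphere hz₀0 hmax_sphere.isExtr hstrict
  have hsub := neg_inner_mem_subDiff1_of_le_comp_sub_norm hz₀0
    (hasGradientAt_iff_hasFDerivAt.2 hstrict.hasFDerivAt) htouch₀ htouch
  refine ⟨⟨_, hsub⟩, _, hsub, ?_⟩
  rw [hc, real_inner_smul_left, real_inner_smul_right, real_inner_self_eq_norm_sq, smul_smul]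
  congr 1
  field_simp

/-- If a `C¹` function `ψ` touches `v(z) = f(ρ - |z|)` from below at
`z₀ ≠ 0`, then `D⁻f(ρ - |z₀|) ≠ ∅` and `∇ψ(z₀) = α z₀/|z₀|` with `-α ∈ D⁻f(ρ - |z₀|)`. -/
theorem touching_from_below_radial {n : ℕ} (ρ : ℝ) (hρ : 0 < ρ) (f : ℝ → ℝ)
    (hf : ContinuousOn f (Set.Icc 0 ρ)) (z₀ : En n) (hz₀ : z₀ ∈ Metric.ball (0 : En n) ρ)
    (hz₀0 : z₀ ≠ 0) (ψ : En n → ℝ) (hψ : ContDiff ℝ 1 ψ)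
    (htouch₀ : ψ z₀ = f (ρ - ‖z₀‖))
    (htouch : ∀ᶠ z in nhds z₀, ψ z ≤ f (ρ - ‖z‖)) :
    (subDiff1 f ρ (ρ - ‖z₀‖)).Nonempty ∧
      ∃ α : ℝ, -α ∈ subDiff1 f ρ (ρ - ‖z₀‖) ∧
        gradient ψ z₀ = α • (‖z₀‖⁻¹ • z₀) :=
  touching_from_below_radial_general ρ f z₀ hz₀0 ψ hψ htouch₀ htouch
end

section
/- Let Ω ⊂ ℝⁿ be a nonempty open bounded set, let f : [0, ρ_Ω] → ℝ be continuous, and assume that u(x) := f(d_∂Ω(x)) is a viscosity solution of −Δ_∞ u = 1 in Ω. Then f is monotone nondecreasing on [0, ρ_Ω]. -/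
open scoped InnerProductSpace
open Metric Set Filter

/-- If `u = f ∘ d_∂Ω` is a viscosity solution of `-Δ_∞ u = 1` in `Ω`,
then `f` is monotone nondecreasing on `[0, ρ_Ω]`. -/
theorem web_solution_profile_monotone {n : ℕ} (Ω : Set (En n)) (hne : Ω.Nonempty)
    (hop : IsOpen Ω) (hbd : Bornology.IsBounded Ω) (f : ℝ → ℝ)
    (hf : ContinuousOn f (Set.Icc 0 (rhoΩ Ω)))
    (hu : IsViscSol Ω (fun x => f (dBd Ω x))) :
    MonotoneOn f (Set.Icc 0 (rhoΩ Ω)) := by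
  intro a ha b hb hab
  by_contra hfb
  push_neg at hfb
  -- basic setup
  have hab' : a < b := lt_of_le_of_ne hab (by rintro rfl; exact absurd hfb (lt_irrefl _))
  have hbpos : 0 < b := lt_of_le_of_lt ha.1 hab'
  have hdcont : Continuous (dBd Ω) := continuous_infDist_pt _
  have hclne : (closure Ω).Nonempty := hne.closure
  have hK : IsCompact (closure Ω) :=
    Metric.isCompact_of_isClosed_isBounded isClosed_closure hbd.closure
  have hrhob : b ≤ rhoΩ Ω := hb.2
  have hrpos : 0 < rhoΩ Ω := lt_of_lt_of_le hbpos hrhob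
  -- frontier is nonempty
  have hfr : (frontier Ω).Nonempty := by
    rcases (frontier Ω).eq_empty_or_nonempty with h | h
    · exfalso
      have hz : ∀ x, dBd Ω x = 0 := by
        intro x; simp [dBd, h, Metric.infDist_empty]
      have : rhoΩ Ω = 0 := by
        have : dBd Ω '' closure Ω = {0} := by
          apply Set.eq_singleton_iff_nonempty_unique_mem.mpr
          exact ⟨⟨dBd Ω hclne.choose, Set.mem_image_of_mem _ hclne.choose_spec⟩,
            by rintro _ ⟨y, -, rfl⟩; exact hz y⟩
        rw [rhoΩ, this, csSup_singleton]
      linarith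
    · exact h
  have hfrc : IsCompact (frontier Ω) :=
    hK.of_isClosed_subset isClosed_frontier frontier_subset_closure
  -- dBd maps closure Ω into [0, rhoΩ]
  have hbdd : BddAbove (dBd Ω '' closure Ω) := (hK.image hdcont).bddAbove
  have hmaps : ∀ x ∈ closure Ω, dBd Ω x ∈ Set.Icc 0 (rhoΩ Ω) := by
    intro x hx
    exact ⟨Metric.infDist_nonneg, le_csSup hbdd (Set.mem_image_of_mem _ hx)⟩
  have hucont : ContinuousOn (fun x => f (dBd Ω x)) (closure Ω) :=
    hf.comp hdcont.continuousOn hmaps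
  -- max point of dBd
  obtain ⟨xs, hxscl, hmax⟩ := hK.exists_isMaxOn hclne hdcont.continuousOn
  have hxsval : dBd Ω xs = rhoΩ Ω := by
    refine (IsGreatest.csSup_eq ⟨Set.mem_image_of_mem _ hxscl, ?_⟩).symm
    rintro _ ⟨y, hy, rfl⟩; exact hmax hy
  have hfr0 : ∀ x ∈ frontier Ω, dBd Ω x = 0 := fun x hx =>
    Metric.infDist_zero_of_mem hx
  have hclΩ : ∀ x ∈ closure Ω, 0 < dBd Ω x → x ∈ Ω := by
    intro x hx hpos
    rw [closure_eq_self_union_frontier] at hx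
    rcases hx with hx | hx
    · exact hx
    · exact absurd (hfr0 x hx) (by linarith)
  have hxsΩ : xs ∈ Ω := hclΩ xs hxscl (by rw [hxsval]; exact hrpos)
  -- the open ball around xs of radius rhoΩ is contained in Ω
  have hdisj : ∀ y ∈ Metric.ball xs (rhoΩ Ω), y ∉ frontier Ω := by
    intro y hy hyf
    have h1 : dBd Ω xs ≤ dist xs y := Metric.infDist_le_dist_of_mem hyf
    rw [Metric.mem_ball, dist_comm] at hy
    rw [hxsval] at h1; linarith
  have hball : Metric.ball xs (rhoΩ Ω) ⊆ Ω := by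
    intro y hy
    by_contra hyΩ
    have hycl : y ∉ closure Ω := by
      intro hycl
      rw [closure_eq_self_union_frontier] at hycl
      rcases hycl with h | h
      · exact hyΩ h
      · exact hdisj y hy h
    have hpre : IsPreconnected (Metric.ball xs (rhoΩ Ω)) :=
      (convex_ball xs (rhoΩ Ω)).isPreconnected
    have hsub : Metric.ball xs (rhoΩ Ω) ⊆ Ω ∪ (closure Ω)ᶜ := by
      intro w hw
      by_cases hwc : w ∈ closure Ω
      · left
        rw [closure_eq_self_union_frontier] at hwc
        rcases hwc with h | h
        · exact h
        · exact absurd h (hdisj w hw)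
      · right; exact hwc
    obtain ⟨w, -, hwΩ, hwc⟩ := hpre Ω (closure Ω)ᶜ hop isClosed_closure.isOpen_compl
      hsub ⟨xs, Metric.mem_ball_self hrpos, hxsΩ⟩ ⟨y, hy, hycl⟩
    exact hwc (subset_closure hwΩ)
  -- nearest boundary point to xs
  obtain ⟨ys, hys, hdys⟩ := hfrc.exists_infDist_eq_dist hfr xs
  have hdistxy : dist xs ys = rhoΩ Ω := by
    rw [← hdys]; exact hxsval
  -- intermediate value: find z in Ω with dBd Ω z = b
  set g : ℝ → ℝ := fun s => dBd Ω (xs + s • (ys - xs)) with hg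
  have hgc : Continuous g := by
    apply hdcont.comp
    exact continuous_const.add (continuous_id.smul continuous_const)
  have hg0 : g 0 = rhoΩ Ω := by simp [hg, hxsval]
  have hg1 : g 1 = 0 := by
    have : xs + (1 : ℝ) • (ys - xs) = ys := by
      rw [one_smul]; abel
    simp [hg, this, hfr0 ys hys]
  have hbmem : b ∈ g '' Set.Icc (0:ℝ) 1 := by
    apply intermediate_value_Icc' zero_le_one hgc.continuousOn
    rw [hg0, hg1]
    exact ⟨le_of_lt hbpos, hrhob⟩
  obtain ⟨s, hs01, hgs⟩ := hbmem
  set z : En n := xs + s • (ys - xs) with hz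
  have hdz : dBd Ω z = b := hgs
  have hs1 : s < 1 := by
    rcases lt_or_eq_of_le hs01.2 with h | h
    · exact h
    · exfalso
      have : z = ys := by
        rw [hz, h, one_smul]; abel
      rw [this, hfr0 ys hys] at hdz
      linarith
  have hzΩ : z ∈ Ω := by
    apply hball
    rw [Metric.mem_ball]
    have : dist z xs = s * rhoΩ Ω := by
      rw [dist_eq_norm, hz, add_sub_cancel_left, norm_smul, Real.norm_eq_abs,
        abs_of_nonneg hs01.1, ← dist_eq_norm, dist_comm, hdistxy]
    rw [this]
    exact (mul_lt_iff_lt_one_left hrpos).mpr hs1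
  -- minimize u over K' = closure Ω ∩ {dBd ≥ a}
  set K' : Set (En n) := closure Ω ∩ (dBd Ω) ⁻¹' (Set.Ici a) with hK'
  have hK'c : IsCompact K' := hK.inter_right (isClosed_Ici.preimage hdcont)
  have hzK' : z ∈ K' := ⟨subset_closure hzΩ, by
    simp only [Set.mem_preimage, Set.mem_Ici, hdz]; exact hab⟩
  obtain ⟨x₀, hx₀K, hmin⟩ := hK'c.exists_isMinOn ⟨z, hzK'⟩
    (hucont.mono Set.inter_subset_left)
  have hminz : f (dBd Ω x₀) ≤ f b := by
    have := hmin hzK'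
    simp only [Set.mem_setOf_eq] at this
    rwa [hdz] at this
  have hx₀a : a < dBd Ω x₀ := by
    rcases lt_or_eq_of_le (Set.mem_Ici.mp (Set.mem_preimage.mp hx₀K.2)) with h | h
    · exact h
    · exfalso; rw [← h] at hminz; linarith
  have hx₀Ω : x₀ ∈ Ω := hclΩ x₀ hx₀K.1 (lt_of_le_of_lt ha.1 hx₀a)
  -- x₀ is a local min of u, touch it from above by a constant
  have hloc : IsLocalMax ((fun _ => f (dBd Ω x₀)) - fun x => f (dBd Ω x)) x₀ := by
    have hNopen : IsOpen (Ω ∩ (dBd Ω) ⁻¹' (Set.Ioi a)) :=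
      hop.inter (isOpen_Ioi.preimage hdcont)
    have hN : Ω ∩ (dBd Ω) ⁻¹' (Set.Ioi a) ∈ nhds x₀ :=
      hNopen.mem_nhds ⟨hx₀Ω, hx₀a⟩
    filter_upwards [hN] with y hy
    have hyK' : y ∈ K' := ⟨subset_closure hy.1, Set.mem_preimage.mpr (Set.mem_Ici.mpr (le_of_lt hy.2))⟩
    have := hmin hyK'
    simp only [Set.mem_setOf_eq] at this
    simp only [Pi.sub_apply]
    linarith
  have hcdiff : ContDiffOn ℝ 2 (fun _ : En n => f (dBd Ω x₀)) Ω := contDiffOn_const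
  have h1 := hu.2.2 (fun _ => f (dBd Ω x₀)) hcdiff x₀ hx₀Ω hloc
  have h0 : infLap (fun _ : En n => f (dBd Ω x₀)) x₀ = 0 := by
    have hgrad : (gradient fun _ : En n => f (dBd Ω x₀)) = fun _ => (0 : En n) :=
      funext fun x => gradient_const x _
    rw [infLap, hgrad]
    simp [fderiv_const]
  rw [h0] at h1
  linarith
end

section
/- Let p₀, …, p_k ∈ ℝⁿ be unit vectors (k ≥ 1), let λ₀, …, λ_k ∈ (0,1) with Σᵢλᵢ = 1, set p := Σᵢλᵢpᵢ, and assume that the vectors p₀−p, …, p_k−p are not all zero. Let F := span{p₀−p, …, p_k−p}, let Q := conv{p−p₀, …, p−p_k}, and let K be the distance from the origin to the relative boundary of Q within F. Then K > 0 and, for every unit vector ζ of the form ζ = z/|z| with z ∈ conv{p₀−p, …, p_k−p}, z ≠ 0, one has min_{i=0,…,k} ⟨pᵢ−p, x⟩ ≤ −K·|⟨ζ, x⟩| for all x ∈ ℝⁿ. -/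
open scoped InnerProductSpace
open Metric Set Filter

/-! Write `qᵢ = p̄ - pᵢ`, so that `Q = conv{qᵢ}`, `F = span{qᵢ}` and `∑ λᵢ qᵢ = 0` with all
`λᵢ > 0`. The surjection `c ↦ ∑ cᵢ qᵢ` onto `F` is open and maps the open set of positive weights
of total mass `< 1` into `Q` (because `0 ∈ Q`) and `λ / 2` to `0`; so `0` lies in the interior of
`Q` relative to `F`. As `Q` is bounded and `F ≠ 0`, the relative boundary is nonempty, whence
`K > 0`, and in the finite-dimensional space `F` the closed `K`-ball about `0` lies in `Q`. Thus
`±K ζ ∈ Q`, and the linear functional `⟪·, x⟫` is maximised on `Q` at some vertex `qᵢ`: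
`K |⟪ζ, x⟫| ≤ ⟪qᵢ, x⟫ = -⟪pᵢ - p̄, x⟫`. -/

theorem Metric.infDist_frontier_pos_of_mem_interior {X : Type*} [MetricSpace X]
    [PreconnectedSpace X] {s : Set X} {x : X} (hx : x ∈ interior s) (hs : s ≠ univ) :
    0 < infDist x (frontier s) :=
  (isClosed_frontier.notMem_iff_infDist_pos
    (nonempty_frontier_iff.2 ⟨⟨x, interior_subset hx⟩, hs⟩)).1 fun h => h.2 hx

section NormedSpace

variable {E : Type*} [NormedAddCommGroup E] [NormedSpace ℝ E]

theorem Metric.closedBall_infDist_frontier_subset_closure [FiniteDimensional ℝ E] {s : Set E}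
    {x : E} (hx : x ∈ s) (hs : s ≠ univ) :
    closedBall x (infDist x (frontier s)) ⊆ closure s := by
  obtain ⟨y, hy, hxy⟩ := exists_mem_frontier_infDist_compl_eq_dist hx hs
  refine (closedBall_subset_closedBall ?_).trans (closedBall_infDist_compl_subset_closure hx)
  exact hxy ▸ infDist_le_dist_of_mem hy

theorem Convex.sum_smul_mem_of_zero_mem {ι : Type*} {s : Set E} (hs : Convex ℝ s)
    (h₀ : (0 : E) ∈ s) {t : Finset ι} {w : ι → ℝ} {z : ι → E} (hw₀ : ∀ i ∈ t, 0 ≤ w i)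
    (hw₁ : ∑ i ∈ t, w i ≤ 1) (hz : ∀ i ∈ t, z i ∈ s) : ∑ i ∈ t, w i • z i ∈ s := by
  rcases (Finset.sum_nonneg hw₀).eq_or_lt with hw | hw
  · rw [Finset.sum_eq_zero fun i hi => by
      rw [(Finset.sum_eq_zero_iff_of_nonneg hw₀).1 hw.symm i hi, zero_smul]]
    exact h₀
  · have hc : t.centerMass w z ∈ s := hs.centerMass_mem hw₀ hw hz
    rw [← smul_inv_smul₀ hw.ne' (∑ i ∈ t, w i • z i)]
    exact hs.smul_mem_of_zero_mem h₀ hc ⟨hw.le, hw₁⟩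

theorem smul_inv_norm_smul_mem_of_closedBall_subset {S : Submodule ℝ E} {C : Set E} {r : ℝ}
    (h : closedBall (0 : S) r ⊆ (↑) ⁻¹' C) {z : E} (hz : z ∈ S) (hz₀ : z ≠ 0) {c : ℝ}
    (hc : |c| ≤ r) : c • ‖z‖⁻¹ • z ∈ C := by
  have hmem : c • ‖z‖⁻¹ • z ∈ S := S.smul_mem _ (S.smul_mem _ hz)
  refine h (show (⟨_, hmem⟩ : S) ∈ closedBall 0 r from ?_)
  rwa [mem_closedBall, dist_zero_right, Submodule.coe_norm, norm_smul, norm_smul, norm_inv,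
    norm_norm, inv_mul_cancel₀ (norm_ne_zero_iff.2 hz₀), mul_one, Real.norm_eq_abs]

section ConvexHullInSpan

variable {ι : Type*}

def convexHullInSpan (v : ι → E) : Set (Submodule.span ℝ (range v)) :=
  (↑) ⁻¹' convexHull ℝ (range v)

theorem isClosed_convexHullInSpan [Finite ι] (v : ι → E) : IsClosed (convexHullInSpan v) :=
  ((finite_range v).isCompact_convexHull ℝ).isClosed.preimage continuous_subtype_val

theorem convexHullInSpan_ne_univ [Finite ι] {v : ι → E} (hv : ∃ i, v i ≠ 0) :
    convexHullInSpan v ≠ univ := by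
  obtain ⟨i, hi⟩ := hv
  have : Nontrivial (Submodule.span ℝ (range v)) :=
    ⟨⟨⟨v i, Submodule.subset_span (mem_range_self i)⟩, 0, by simpa using hi⟩⟩
  have hbdd : Bornology.IsBounded (convexHullInSpan v) :=
    isometry_subtype_coe.antilipschitz.isBounded_preimage
      ((finite_range v).isCompact_convexHull ℝ).isBounded
  exact fun h => NormedSpace.unbounded_univ ℝ _ (h ▸ hbdd)

theorem zero_mem_interior_convexHullInSpan [Fintype ι] (v : ι → E) {w : ι → ℝ}
    (hw₀ : ∀ i, 0 < w i) (hw₁ : ∑ i, w i = 1) (hwv : ∑ i, w i • v i = 0) :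
    0 ∈ interior (convexHullInSpan v) := by
  have : FiniteDimensional ℝ (Submodule.span ℝ (range v)) :=
    FiniteDimensional.span_of_finite ℝ (finite_range v)
  have hmem (c : ι → ℝ) : Fintype.linearCombination ℝ v c ∈ Submodule.span ℝ (range v) :=
    Fintype.range_linearCombination ℝ v ▸ LinearMap.mem_range_self _ c
  set f := (Fintype.linearCombination ℝ v).codRestrict _ hmem
  have hf : Function.Surjective f := by
    rintro ⟨y, hy⟩
    rw [← Fintype.range_linearCombination] at hy
    obtain ⟨c, rfl⟩ := hy
    exact ⟨c, rfl⟩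
  set U : Set (ι → ℝ) := pi univ (fun _ => Ioi 0) ∩ {c | ∑ i, c i < 1}
  have hU : IsOpen U := (isOpen_set_pi finite_univ fun _ _ => isOpen_Ioi).inter
    (isOpen_lt (continuous_finsetSum _ fun i _ => continuous_apply i) continuous_const)
  have hfU : f '' U ⊆ convexHullInSpan v := by
    rintro _ ⟨c, ⟨hc₀, hc₁ : ∑ i, c i < 1⟩, rfl⟩
    rw [mem_univ_pi] at hc₀
    simp only [convexHullInSpan, mem_preimage, f, LinearMap.codRestrict_apply,
      Fintype.linearCombination_apply]
    refine (convex_convexHull ℝ _).sum_smul_mem_of_zero_mem ?_ (fun i _ => (hc₀ i).le) hc₁.le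
      fun i _ => subset_convexHull ℝ _ (mem_range_self i)
    rw [← hwv, ← Finset.centerMass_eq_of_sum_1 _ _ hw₁]
    exact Finset.centerMass_mem_convexHull _ (fun i _ => (hw₀ i).le) (by simp [hw₁])
      fun i _ => mem_range_self i
  refine mem_interior.2 ⟨f '' U, hfU, f.isOpenMap_of_finiteDimensional hf U hU,
    fun i => w i / 2, ⟨fun i _ => half_pos (hw₀ i), ?_⟩, ?_⟩
  · show ∑ i, w i / 2 < 1
    rw [← Finset.sum_div, hw₁]; norm_num
  · ext
    simp only [f, LinearMap.codRestrict_apply, Fintype.linearCombination_apply, div_eq_inv_mul,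
      ← smul_smul, ← Finset.smul_sum, hwv, smul_zero, Submodule.coe_zero]

theorem closedBall_infDist_frontier_subset_convexHullInSpan [Finite ι] {v : ι → E}
    (hv : ∃ i, v i ≠ 0) {x : Submodule.span ℝ (range v)} (hx : x ∈ convexHullInSpan v) :
    closedBall x (infDist x (frontier (convexHullInSpan v))) ⊆ convexHullInSpan v := by
  have : FiniteDimensional ℝ (Submodule.span ℝ (range v)) :=
    FiniteDimensional.span_of_finite ℝ (finite_range v)
  exact (closedBall_infDist_frontier_subset_closure hx (convexHullInSpan_ne_univ hv)).trans
    (isClosed_convexHullInSpan v).closure_subset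

end ConvexHullInSpan

end NormedSpace

section InnerProductSpace

variable {E : Type*} [NormedAddCommGroup E] [InnerProductSpace ℝ E]

theorem exists_inner_le_of_mem_convexHull {ι : Type*} {v : ι → E} {y : E}
    (hy : y ∈ convexHull ℝ (range v)) (x : E) : ∃ i, ⟪y, x⟫_ℝ ≤ ⟪v i, x⟫_ℝ := by
  obtain ⟨_, ⟨i, rfl⟩, hi⟩ :=
    ((innerₛₗ ℝ x).convexOn convex_univ).exists_ge_of_mem_convexHull (subset_univ _) hy
  exact ⟨i, by simpa [real_inner_comm x] using hi⟩

theorem exists_mul_abs_inner_le_inner {ι : Type*} {v : ι → E} {r : ℝ} (hr : 0 ≤ r) {ζ : E}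
    (hζ : ∀ c : ℝ, |c| ≤ r → c • ζ ∈ convexHull ℝ (range v)) (x : E) :
    ∃ i, r * |⟪ζ, x⟫_ℝ| ≤ ⟪v i, x⟫_ℝ := by
  obtain ⟨c, hc, hcx⟩ : ∃ c : ℝ, |c| ≤ r ∧ ⟪c • ζ, x⟫_ℝ = r * |⟪ζ, x⟫_ℝ| := by
    rcases abs_cases ⟪ζ, x⟫_ℝ with ⟨h, -⟩ | ⟨h, -⟩
    · exact ⟨r, (abs_of_nonneg hr).le, by rw [h, real_inner_smul_left]⟩
    · exact ⟨-r, by rw [abs_neg, abs_of_nonneg hr], by rw [h, real_inner_smul_left]; ring⟩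
  exact hcx ▸ exists_inner_le_of_mem_convexHull (hζ c hc) x

end InnerProductSpace

theorem min_inner_estimate_general {n k : ℕ} (p : Fin (k + 1) → En n)
    (lam : Fin (k + 1) → ℝ)
    (hlam : ∀ i, lam i ∈ Set.Ioo (0 : ℝ) 1) (hsum : ∑ i, lam i = 1)
    (pbar : En n) (hpbar : pbar = ∑ i, lam i • p i)
    (hnz : ∃ i, p i - pbar ≠ 0)
    (F : Submodule ℝ (En n)) (hF : F = Submodule.span ℝ (Set.range fun i => p i - pbar))
    (Q : Set (En n)) (hQ : Q = convexHull ℝ (Set.range fun i => pbar - p i))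
    (K : ℝ)
    (hK : K = Metric.infDist (0 : En n)
      (Subtype.val '' frontier ((Subtype.val : F → En n) ⁻¹' Q))) :
    0 < K ∧
      ∀ ζ : En n,
        (∃ z ∈ convexHull ℝ (Set.range fun i => p i - pbar), z ≠ 0 ∧ ζ = ‖z‖⁻¹ • z) →
        ∀ x : En n,
          Finset.univ.inf' Finset.univ_nonempty (fun i => ⟪p i - pbar, x⟫_ℝ)
            ≤ -K * |⟪ζ, x⟫_ℝ| := by
  set q : Fin (k + 1) → En n := fun i => pbar - p i
  have hpq : (fun i => p i - pbar) = -q := funext fun i => (neg_sub _ _).symm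
  have hFq : F = Submodule.span ℝ (range q) := by rw [hF, hpq, ← neg_range', Submodule.span_neg]
  have hzF : convexHull ℝ (range fun i => p i - pbar) ⊆ F :=
    hF ▸ convexHull_min Submodule.subset_span (Submodule.convex _)
  subst hFq hQ
  have hq : ∑ i, lam i • q i = 0 := by
    simp only [q, smul_sub, Finset.sum_sub_distrib, ← Finset.sum_smul, hsum, one_smul, hpbar,
      sub_self]
  have h0 := zero_mem_interior_convexHullInSpan q (fun i => (hlam i).1) hsum hq
  obtain ⟨i₀, hi₀⟩ := hnz
  have hq₀ : ∃ i, q i ≠ 0 := ⟨i₀, sub_ne_zero.2 (sub_ne_zero.1 hi₀).symm⟩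
  have hK' : K = infDist 0 (frontier (convexHullInSpan q)) := by
    rw [hK]; exact infDist_image (x := 0) isometry_subtype_coe
  have hKpos : 0 < K :=
    hK' ▸ infDist_frontier_pos_of_mem_interior h0 (convexHullInSpan_ne_univ hq₀)
  have hball : closedBall 0 K ⊆ convexHullInSpan q :=
    hK' ▸ closedBall_infDist_frontier_subset_convexHullInSpan hq₀ (interior_subset h0)
  refine ⟨hKpos, ?_⟩
  rintro _ ⟨z, hz, hz₀, rfl⟩ x
  obtain ⟨i, hi⟩ := exists_mul_abs_inner_le_inner hKpos.le
    (fun c hc => smul_inv_norm_smul_mem_of_closedBall_subset hball (hzF hz) hz₀ hc) x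
  calc Finset.univ.inf' Finset.univ_nonempty (fun i => ⟪p i - pbar, x⟫_ℝ)
      ≤ ⟪p i - pbar, x⟫_ℝ := Finset.inf'_le _ (Finset.mem_univ i)
    _ = -⟪q i, x⟫_ℝ := by rw [← inner_neg_left, neg_sub]
    _ ≤ -K * |⟪‖z‖⁻¹ • z, x⟫_ℝ| := by linarith

/-- Geometric lemma (Step 2 of the distance estimate): lower bound for
the minimum of `⟨pᵢ - p, x⟩` in terms of the distance `K` from the origin to the
relative boundary of `Q = conv{p - p₀, …, p - p_k}` within `F = span{p₀ - p, …, p_k - p}`. -/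
theorem min_inner_estimate {n k : ℕ} (hk : 1 ≤ k) (p : Fin (k + 1) → En n)
    (hunit : ∀ i, ‖p i‖ = 1) (lam : Fin (k + 1) → ℝ)
    (hlam : ∀ i, lam i ∈ Set.Ioo (0 : ℝ) 1) (hsum : ∑ i, lam i = 1)
    (pbar : En n) (hpbar : pbar = ∑ i, lam i • p i)
    (hnz : ∃ i, p i - pbar ≠ 0)
    (F : Submodule ℝ (En n)) (hF : F = Submodule.span ℝ (Set.range fun i => p i - pbar))
    (Q : Set (En n)) (hQ : Q = convexHull ℝ (Set.range fun i => pbar - p i))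
    (K : ℝ)
    (hK : K = Metric.infDist (0 : En n)
      (Subtype.val '' frontier ((Subtype.val : F → En n) ⁻¹' Q))) :
    0 < K ∧
      ∀ ζ : En n,
        (∃ z ∈ convexHull ℝ (Set.range fun i => p i - pbar), z ≠ 0 ∧ ζ = ‖z‖⁻¹ • z) →
        ∀ x : En n,
          Finset.univ.inf' Finset.univ_nonempty (fun i => ⟪p i - pbar, x⟫_ℝ)
            ≤ -K * |⟪ζ, x⟫_ℝ| :=
  min_inner_estimate_general p lam hlam hsum pbar hpbar hnz F hF Q hQ K hK
end
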